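/- arXiv:1806.09670 — 11 statements merged into one kernel-verified Lean document; each statement's English description precedes it below -/
import Mathlib

section
/- Let a, b be two multiplicatively independent integers ≥ 2 and let τ > 0 with τ ≠ τ₀ := ((b−1) log a)/((a−1) log b). Then there exists d₀ < 1 such that for every δ > 0 there exist ε > 0 and K > 0 with: for all sufficiently large x, the number of positive integers n ≤ x satisfying |s_b(n) − τ s_a(n)| ≤ ε s_a(n) is at most K x^{d₀+δ}. -/
/-!
The base-`b` digit sum of a typical `n ≤ x` is close to `(b - 1)/2 · log_b x`, and the ratio of
these typical values for the bases `b` and `a` is `τ₀`. So if `s_b(n)` is within `ε s_a(n)` of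
`τ s_a(n)` with `τ ≠ τ₀` and `ε` small, then `s_a(n)` or `s_b(n)` is off its typical value by a
fixed factor. Such large deviations are rare by Chernoff's method: with
`G(t) = 1 + t + ⋯ + t^{b-1}` we have `∑_{n < b^L} t^{s_b(n)} = G(t)^L`, so at most
`G(t)^L / t^{cL}` integers `n < b^L` have `t^{s_b(n)} ≥ t^{cL}`, and `G(t) / t^c < b` for
suitable `t` near `1` as soon as
`c ≠ (b - 1)/2`, because the derivative of `G(t) / t^c` at `t = 1` is `b ((b - 1)/2 - c)`.
This gives a count `O(x^d)` with `d < 1`.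
-/

open Finset Filter Topology

theorem List.sum_fixedLengthDigits_pow_sum {R : Type*} [CommSemiring R] {b : ℕ} (hb : 1 < b)
    (t : R) (l : ℕ) :
    ∑ L ∈ fixedLengthDigits hb l, t ^ L.sum = (∑ j ∈ Finset.range b, t ^ j) ^ l := by
  induction l with
  | zero => simp
  | succ l ih =>
    rw [fixedLengthDigits_succ_eq_disjiUnion, sum_disjiUnion, pow_succ', ← ih, sum_mul_sum]
    refine sum_congr rfl fun d _ => ?_
    rw [consFixedLengthDigits, sum_image (by simp)]
    simp [pow_add]

theorem Nat.sum_range_pow_digits_sum {R : Type*} [CommSemiring R] {b : ℕ} (hb : 1 < b)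
    (t : R) (l : ℕ) :
    ∑ n ∈ range (b ^ l), t ^ (b.digits n).sum = (∑ j ∈ range b, t ^ j) ^ l := by
  rw [← List.sum_fixedLengthDigits_pow_sum hb]
  refine (sum_nbij (ofDigits b) (bijOn_ofDigits' hb l).1
    (bijOn_ofDigits' hb l).2.1 (bijOn_ofDigits' hb l).2.2 fun L hL ↦ ?_).symm
  rw [sum_digits_ofDigits_eq_sum hb ((List.mem_fixedLengthDigits_iff hb).mp hL)]

theorem Nat.card_filter_le_pow_digits_sum_mul_le {b : ℕ} (hb : 1 < b) {t : ℝ} (ht : 0 ≤ t)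
    (y : ℝ) (l : ℕ) :
    #{n ∈ range (b ^ l) | y ≤ t ^ (b.digits n).sum} * y ≤ (∑ j ∈ range b, t ^ j) ^ l := by
  rw [← Nat.sum_range_pow_digits_sum hb, ← nsmul_eq_mul]
  calc _ ≤ ∑ n ∈ range (b ^ l) with y ≤ t ^ (b.digits n).sum, t ^ (b.digits n).sum :=
        card_nsmul_le_sum _ _ _ fun n hn => (mem_filter.1 hn).2
    _ ≤ _ := sum_le_sum_of_subset_of_nonneg (filter_subset _ _) fun _ _ _ => by positivity

def HasPowerSavingCount (P : ℝ → ℕ → Prop) : Prop :=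
  ∃ d < (1 : ℝ), ∃ C > (0 : ℝ), ∀ x ≥ (1 : ℝ),
    ({n : ℕ | (n : ℝ) ≤ x ∧ P x n}.ncard : ℝ) ≤ C * x ^ d

namespace HasPowerSavingCount

variable {P Q : ℝ → ℕ → Prop}

theorem mono (hQ : HasPowerSavingCount Q) (h : ∀ x n, P x n → Q x n) :
    HasPowerSavingCount P := by
  obtain ⟨d, hd, C, hC, hcount⟩ := hQ
  refine ⟨d, hd, C, hC, fun x hx => le_trans ?_ (hcount x hx)⟩
  have hfin : {n : ℕ | (n : ℝ) ≤ x ∧ Q x n}.Finite :=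
    (Set.finite_Iic ⌊x⌋₊).subset fun n hn => Nat.le_floor hn.1
  exact_mod_cast Set.ncard_le_ncard (fun n => And.imp_right (h x n)) hfin

theorem or (hP : HasPowerSavingCount P) (hQ : HasPowerSavingCount Q) :
    HasPowerSavingCount fun x n => P x n ∨ Q x n := by
  obtain ⟨d₁, hd₁, C₁, hC₁, hP⟩ := hP
  obtain ⟨d₂, hd₂, C₂, hC₂, hQ⟩ := hQ
  refine ⟨max d₁ d₂, max_lt hd₁ hd₂, C₁ + C₂, by positivity, fun x hx => ?_⟩
  have hunion : {n : ℕ | (n : ℝ) ≤ x ∧ (P x n ∨ Q x n)} =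
      {n : ℕ | (n : ℝ) ≤ x ∧ P x n} ∪ {n : ℕ | (n : ℝ) ≤ x ∧ Q x n} := by
    ext n; simp only [Set.mem_ofPred_eq, Set.mem_union, and_or_left]
  calc ({n : ℕ | (n : ℝ) ≤ x ∧ (P x n ∨ Q x n)}.ncard : ℝ)
      ≤ {n : ℕ | (n : ℝ) ≤ x ∧ P x n}.ncard + {n : ℕ | (n : ℝ) ≤ x ∧ Q x n}.ncard := by
        rw [hunion]; exact_mod_cast Set.ncard_union_le _ _
    _ ≤ C₁ * x ^ d₁ + C₂ * x ^ d₂ := add_le_add (hP x hx) (hQ x hx)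
    _ ≤ (C₁ + C₂) * x ^ max d₁ d₂ := by
      rw [add_mul]
      gcongr
      exacts [le_max_left _ _, le_max_right _ _]

end HasPowerSavingCount

theorem Real.rpow_logb_comm {b x y : ℝ} (hx : 0 < x) (hy : 0 < y) :
    x ^ logb b y = y ^ logb b x := by
  rw [rpow_def_of_pos hx, rpow_def_of_pos hy, logb, logb, mul_div_left_comm]

noncomputable def chernoffBase (b : ℕ) (c t : ℝ) : ℝ := (∑ j ∈ range b, t ^ j) / t ^ c

theorem hasPowerSavingCount_of_chernoffBase_lt {b : ℕ} (hb : 1 < b) {c t : ℝ} (ht : 0 < t)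
    (hbase : chernoffBase b c t < b) :
    HasPowerSavingCount fun x n => t ^ (c * Real.logb b x) ≤ t ^ (b.digits n).sum := by
  set G := ∑ j ∈ range b, t ^ j with hGdef
  have hb' : (1 : ℝ) < b := by exact_mod_cast hb
  have hG : 1 ≤ G := by
    simpa using single_le_sum (f := fun j => t ^ j) (fun j _ => by positivity)
      (mem_range.2 (by omega : 0 < b))
  have hbase_pos : 0 < chernoffBase b c t := by unfold chernoffBase; positivity
  refine ⟨Real.logb b (chernoffBase b c t), (Real.logb_lt_iff_lt_rpow hb' hbase_pos).2
    (by simpa using hbase), G, by positivity, fun x hx => ?_⟩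
  set ℓ := Real.logb b x
  have hℓ : 0 ≤ ℓ := Real.logb_nonneg hb' hx
  set L := ⌊ℓ⌋₊ + 1
  have hLℓ : (L : ℝ) ≤ ℓ + 1 := by
    push_cast [L]; linarith [Nat.floor_le hℓ]
  have hxL : x < (b : ℝ) ^ L := by
    calc x = (b : ℝ) ^ ℓ := (Real.rpow_logb (by positivity) hb'.ne' (by positivity)).symm
      _ < (b : ℝ) ^ (L : ℝ) :=
        Real.rpow_lt_rpow_of_exponent_lt hb' (by simpa [L] using Nat.lt_floor_add_one ℓ)
      _ = (b : ℝ) ^ L := Real.rpow_natCast _ _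
  have hsub : {n : ℕ | (n : ℝ) ≤ x ∧ t ^ (c * ℓ) ≤ t ^ (b.digits n).sum} ⊆
      ↑{n ∈ range (b ^ L) | t ^ (c * ℓ) ≤ t ^ (b.digits n).sum} := fun n hn => by
    refine mem_filter.2 ⟨mem_range.2 ?_, hn.2⟩
    exact_mod_cast hn.1.trans_lt hxL
  have htc : 0 < t ^ (c * ℓ) := Real.rpow_pos_of_pos ht _
  calc ({n : ℕ | (n : ℝ) ≤ x ∧ t ^ (c * ℓ) ≤ t ^ (b.digits n).sum}.ncard : ℝ)
      ≤ #{n ∈ range (b ^ L) | t ^ (c * ℓ) ≤ t ^ (b.digits n).sum} := by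
        rw [← Set.ncard_coe_finset]; exact_mod_cast Set.ncard_le_ncard hsub
    _ ≤ G ^ L / t ^ (c * ℓ) := by
        rw [le_div_iff₀ htc]; exact Nat.card_filter_le_pow_digits_sum_mul_le hb ht.le _ L
    _ ≤ G ^ (ℓ + 1) / t ^ (c * ℓ) := by
        gcongr; rw [← Real.rpow_natCast]; exact Real.rpow_le_rpow_of_exponent_le hG hLℓ
    _ = G * chernoffBase b c t ^ ℓ := by
        rw [Real.rpow_add_one (by positivity), chernoffBase, ← hGdef,
          Real.div_rpow (by positivity) (by positivity), ← Real.rpow_mul ht.le]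
        ring
    _ = G * x ^ Real.logb b (chernoffBase b c t) := by
        rw [Real.rpow_logb_comm (by positivity) hbase_pos]

theorem chernoffBase_one (b : ℕ) (c : ℝ) : chernoffBase b c 1 = b := by
  simp [chernoffBase]

theorem hasDerivAt_chernoffBase_one (b : ℕ) (c : ℝ) :
    HasDerivAt (chernoffBase b c) (b * (((b : ℝ) - 1) / 2 - c)) 1 := by
  have hG : HasDerivAt (fun t : ℝ => ∑ j ∈ range b, t ^ j) (∑ j ∈ range b, (j : ℝ)) 1 := by
    simpa using HasDerivAt.fun_sum fun j _ => hasDerivAt_pow j (1 : ℝ)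
  have hgauss : ∑ j ∈ range b, (j : ℝ) = b * ((b : ℝ) - 1) / 2 := by
    rw [← Nat.cast_sum, sum_range_id, ← Nat.choose_two_right, Nat.cast_choose_two]
  have h := hG.fun_div (Real.hasDerivAt_rpow_const (p := c) (Or.inl one_ne_zero)) (by simp)
  simp only [hgauss, Real.one_rpow, one_pow, sum_const, card_range, nsmul_eq_mul, mul_one,
    div_one] at h
  exact h.congr_deriv (by ring)

theorem HasDerivAt.eventually_nhdsGT_lt {f : ℝ → ℝ} {f' x : ℝ} (hf : HasDerivAt f f' x)
    (hf' : f' < 0) : ∀ᶠ y in 𝓝[>] x, f y < f x := by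
  filter_upwards [(hf.hasDerivWithinAt (s := Set.Ioi x)).limsup_slope_le' (lt_irrefl x) hf',
    self_mem_nhdsWithin] with y hslope (hxy : x < y)
  rw [slope_def_field, div_neg_iff] at hslope
  rcases hslope with ⟨_, h⟩ | ⟨h, _⟩ <;> linarith

theorem HasDerivAt.eventually_nhdsLT_lt {f : ℝ → ℝ} {f' x : ℝ} (hf : HasDerivAt f f' x)
    (hf' : 0 < f') : ∀ᶠ y in 𝓝[<] x, f y < f x := by
  have hslope : ∀ᶠ y in 𝓝[<] x, 0 < slope f x y :=
    (hasDerivWithinAt_iff_tendsto_slope' (s := Set.Iio x) (lt_irrefl x)).1 hf.hasDerivWithinAt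
      (lt_mem_nhds hf')
  filter_upwards [hslope, self_mem_nhdsWithin] with y hslope (hxy : y < x)
  rw [slope_def_field, lt_div_iff_of_neg (by linarith)] at hslope
  linarith

/-- The typical size of `s_b(n)` for `n ≤ x`. -/
noncomputable def meanDigitSum (b : ℕ) (x : ℝ) : ℝ := ((b : ℝ) - 1) / 2 * Real.logb b x

theorem hasPowerSavingCount_mul_meanDigitSum_le {b : ℕ} (hb : 1 < b) {κ : ℝ} (hκ : 1 < κ) :
    HasPowerSavingCount fun x n => κ * meanDigitSum b x ≤ (b.digits n).sum := by
  have hb' : (1 : ℝ) < b := by exact_mod_cast hb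
  have hderiv : (b : ℝ) * (((b : ℝ) - 1) / 2 - κ * (((b : ℝ) - 1) / 2)) < 0 :=
    mul_neg_of_pos_of_neg (by positivity) (by nlinarith)
  obtain ⟨t, htb, ht⟩ := (((hasDerivAt_chernoffBase_one b _).eventually_nhdsGT_lt hderiv).and
    self_mem_nhdsWithin).exists
  rw [chernoffBase_one] at htb
  refine (hasPowerSavingCount_of_chernoffBase_lt hb (zero_lt_one.trans ht) htb).mono
    fun x n h => ?_
  rw [← Real.rpow_natCast, mul_assoc]
  exact Real.rpow_le_rpow_of_exponent_le ht.le h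

theorem hasPowerSavingCount_digits_sum_le_mul_meanDigitSum {b : ℕ} (hb : 1 < b) {κ : ℝ}
    (hκ : κ < 1) :
    HasPowerSavingCount fun x n => ((b.digits n).sum : ℝ) ≤ κ * meanDigitSum b x := by
  have hb' : (1 : ℝ) < b := by exact_mod_cast hb
  have hderiv : 0 < (b : ℝ) * (((b : ℝ) - 1) / 2 - κ * (((b : ℝ) - 1) / 2)) :=
    mul_pos (by positivity) (by nlinarith)
  obtain ⟨t, htb, ht⟩ := (((hasDerivAt_chernoffBase_one b _).eventually_nhdsLT_lt hderiv).and
    (Ioo_mem_nhdsLT zero_lt_one)).exists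
  rw [chernoffBase_one] at htb
  refine (hasPowerSavingCount_of_chernoffBase_lt hb ht.1 htb).mono fun x n h => ?_
  rw [← Real.rpow_natCast, mul_assoc]
  exact Real.rpow_le_rpow_of_exponent_ge ht.1 ht.2.le h

theorem mul_meanDigitSum_eq {a b : ℕ} (ha : 1 < a) (hb : 1 < b) (x : ℝ) :
    ((b : ℝ) - 1) * Real.log a / (((a : ℝ) - 1) * Real.log b) * meanDigitSum a x =
      meanDigitSum b x := by
  have ha' : (1 : ℝ) < a := by exact_mod_cast ha
  have hb' : (1 : ℝ) < b := by exact_mod_cast hb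
  have := Real.log_pos ha'
  have := Real.log_pos hb'
  have : (a : ℝ) - 1 ≠ 0 := by linarith
  unfold meanDigitSum Real.logb
  field_simp

section DigitSumRatio

variable {a b : ℕ} {τ τ₀ : ℝ}

theorem hasPowerSavingCount_digitSum_ratio_of_lt (ha : 1 < a) (hb : 1 < b)
    (hM : ∀ x, τ₀ * meanDigitSum a x = meanDigitSum b x) (hτ : 0 < τ) (hlt : τ < τ₀) :
    ∃ ε > 0, HasPowerSavingCount fun _ n =>
      |((b.digits n).sum : ℝ) - τ * (a.digits n).sum| ≤ ε * (a.digits n).sum := by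
  -- The thresholds match: `(τ + ε) * κ_a * meanDigitSum a x = κ_b * meanDigitSum b x`.
  set ε := (τ₀ - τ) / 3 with hε_def
  have hε : 0 < ε := by positivity
  have hA := hasPowerSavingCount_mul_meanDigitSum_le ha (κ := (τ₀ - ε) / (τ + ε))
    ((one_lt_div (by positivity)).2 (by linarith [hε_def]))
  have hB := hasPowerSavingCount_digits_sum_le_mul_meanDigitSum hb (κ := (τ₀ - ε) / τ₀)
    ((div_lt_one (by linarith [hε_def])).2 (by linarith [hε_def]))
  refine ⟨ε, hε, (hA.or hB).mono fun x n h => or_iff_not_imp_left.2 fun hsa => ?_⟩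
  calc ((b.digits n).sum : ℝ) ≤ (τ + ε) * (a.digits n).sum := by linarith [(abs_le.1 h).2]
    _ ≤ (τ + ε) * ((τ₀ - ε) / (τ + ε) * meanDigitSum a x) := by
      gcongr; exact (not_le.1 hsa).le
    _ = (τ₀ - ε) / τ₀ * meanDigitSum b x := by
      rw [← hM]
      field_simp [hτ.trans hlt |>.ne']

theorem hasPowerSavingCount_digitSum_ratio_of_gt (ha : 1 < a) (hb : 1 < b)
    (hM : ∀ x, τ₀ * meanDigitSum a x = meanDigitSum b x) (hτ₀ : 0 < τ₀) (hgt : τ₀ < τ) :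
    ∃ ε > 0, HasPowerSavingCount fun _ n =>
      |((b.digits n).sum : ℝ) - τ * (a.digits n).sum| ≤ ε * (a.digits n).sum := by
  set ε := (τ - τ₀) / 3 with hε_def
  have hε : 0 < ε := by positivity
  have hA := hasPowerSavingCount_digits_sum_le_mul_meanDigitSum ha (κ := (τ₀ + ε) / (τ - ε))
    ((div_lt_one (by linarith [hε_def])).2 (by linarith [hε_def]))
  have hB := hasPowerSavingCount_mul_meanDigitSum_le hb (κ := (τ₀ + ε) / τ₀)
    ((one_lt_div hτ₀).2 (by linarith [hε_def]))
  refine ⟨ε, hε, (hA.or hB).mono fun x n h => or_iff_not_imp_left.2 fun hsa => ?_⟩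
  calc (τ₀ + ε) / τ₀ * meanDigitSum b x
        = (τ - ε) * ((τ₀ + ε) / (τ - ε) * meanDigitSum a x) := by
        have : τ - ε ≠ 0 := by linarith [hε_def]
        rw [← hM]
        field_simp
    _ ≤ (τ - ε) * (a.digits n).sum := by gcongr; exacts [by linarith, (not_le.1 hsa).le]
    _ ≤ (b.digits n).sum := by linarith [(abs_le.1 h).1]

end DigitSumRatio

theorem upper_bound_count_digit_sum_relation_general
    (a b : ℕ) (ha : 2 ≤ a) (hb : 2 ≤ b)
    (τ : ℝ) (hτ : 0 < τ)
    (hτne : τ ≠ ((b : ℝ) - 1) * Real.log a / (((a : ℝ) - 1) * Real.log b)) :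
    ∃ d₀ < (1 : ℝ), ∀ δ > (0 : ℝ), ∃ ε > (0 : ℝ), ∃ K > (0 : ℝ), ∃ x₀ : ℝ, ∀ x ≥ x₀,
      (({n : ℕ | 0 < n ∧ (n : ℝ) ≤ x ∧
          |((Nat.digits b n).sum : ℝ) - τ * ((Nat.digits a n).sum : ℝ)|
            ≤ ε * ((Nat.digits a n).sum : ℝ)}.ncard : ℝ))
        ≤ K * x ^ (d₀ + δ) := by
  have hM := mul_meanDigitSum_eq (a := a) (b := b) (by omega) (by omega)
  obtain ⟨ε, hε, hcount⟩ : ∃ ε > 0, HasPowerSavingCount fun _ n =>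
      |((b.digits n).sum : ℝ) - τ * (a.digits n).sum| ≤ ε * (a.digits n).sum := by
    rcases hτne.lt_or_gt with h | h
    · exact hasPowerSavingCount_digitSum_ratio_of_lt (by omega) (by omega) hM hτ h
    · have ha' : (1 : ℝ) < a := by exact_mod_cast ha
      have hb' : (1 : ℝ) < b := by exact_mod_cast hb
      have := Real.log_pos ha'
      have := Real.log_pos hb'
      exact hasPowerSavingCount_digitSum_ratio_of_gt (by omega) (by omega) hM
        (div_pos (by nlinarith) (by nlinarith)) h
  obtain ⟨d₀, hd₀, K, hK, hbound⟩ := hcount.mono fun _ n (h : 0 < n ∧ _) => h.2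
  refine ⟨d₀, hd₀, fun δ hδ => ⟨ε, hε, K, hK, 1, fun x hx => ?_⟩⟩
  calc _ = _ := by simp only [and_left_comm]
    _ ≤ K * x ^ d₀ := hbound x hx
    _ ≤ K * x ^ (d₀ + δ) := by gcongr; linarith

/-- upper bound part of Theorem 1.1: for `τ ≠ τ₀` there is `d₀ < 1` such that
the number of `n ≤ x` with `|s_b(n) - τ s_a(n)| ≤ ε s_a(n)` is `≤ K x^{d₀+δ}`. -/
theorem upper_bound_count_digit_sum_relation
    (a b : ℕ) (ha : 2 ≤ a) (hb : 2 ≤ b)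
    (hmi : ∀ m n : ℕ, a ^ m = b ^ n → m = 0 ∧ n = 0)
    (τ : ℝ) (hτ : 0 < τ)
    (hτne : τ ≠ ((b : ℝ) - 1) * Real.log a / (((a : ℝ) - 1) * Real.log b)) :
    ∃ d₀ < (1 : ℝ), ∀ δ > (0 : ℝ), ∃ ε > (0 : ℝ), ∃ K > (0 : ℝ), ∃ x₀ : ℝ, ∀ x ≥ x₀,
      (({n : ℕ | 0 < n ∧ (n : ℝ) ≤ x ∧
          |((Nat.digits b n).sum : ℝ) - τ * ((Nat.digits a n).sum : ℝ)|
            ≤ ε * ((Nat.digits a n).sum : ℝ)}.ncard : ℝ))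
        ≤ K * x ^ (d₀ + δ) :=
  upper_bound_count_digit_sum_relation_general a b ha hb τ hτ hτne
end

section
/- Let a, b ≥ 2 be integers that are multiplicatively dependent, i.e., there exist positive integers r, s with a^r = b^s. Then there exist c > 0 and K > 0 such that for all sufficiently large x, the number of positive integers n ≤ x with s_a(n) = s_b(n) is at least K x^c. -/
/-!
Put `q = a ^ r = b ^ s`. A sum of distinct powers `q ^ i` has base-`a` digits `1` exactly at the
positions `r * i` and `0` elsewhere, and likewise in base `b`, so both digit sums equal the number
of summands. The `2 ^ m - 1` nonempty subsets of `{0, …, m - 1}` give distinct such integers below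
`q ^ m`, and `2 ^ m` is comparable to `x ^ (log_q 2)` when `q ^ m ≤ x < q ^ (m + 1)`.
-/

open Finset

theorem Nat.digits_sum_sum_pow {b : ℕ} (hb : 2 ≤ b) (T : Finset ℕ) :
    (b.digits (∑ i ∈ T, b ^ i)).sum = #T := by
  induction T using Finset.induction_on_max with
  | empty => simp
  | insert x s hlt ih =>
    set n := ∑ i ∈ s, b ^ i
    have hlen : (b.digits n).length ≤ x :=
      (Nat.digits_length_le_iff hb n).2 (Nat.geomSum_lt hb hlt)
    have hdigits := Nat.digits_append_zeroes_append_digits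
      (n := n) (k := x - (b.digits n).length) hb one_pos
    rw [Nat.add_sub_cancel' hlen, mul_one, Nat.digits_of_lt b 1 one_ne_zero hb] at hdigits
    have hx : x ∉ s := fun hx => (hlt x hx).false
    rw [sum_insert hx, add_comm, ← hdigits, card_insert_of_notMem hx, ← ih]
    simp

theorem Nat.digits_sum_sum_pow_pow {b r : ℕ} (hb : 2 ≤ b) (hr : 0 < r) (S : Finset ℕ) :
    (b.digits (∑ i ∈ S, (b ^ r) ^ i)).sum = #S := by
  simp only [← pow_mul]
  have hinj : Set.InjOn (r * ·) S := fun i _ j _ h => Nat.eq_of_mul_eq_mul_left hr h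
  have := Nat.digits_sum_sum_pow hb (S.image (r * ·))
  rwa [sum_image hinj, Finset.card_image_of_injOn hinj] at this

theorem two_pow_sub_one_le_ncard_of_forall_geomSum {q : ℕ} (hq : 2 ≤ q) {P : ℕ → Prop}
    (hP : ∀ S : Finset ℕ, P (∑ i ∈ S, q ^ i)) {m : ℕ} {x : ℝ} (hx : (q : ℝ) ^ m ≤ x) :
    2 ^ m - 1 ≤ {n : ℕ | 0 < n ∧ (n : ℝ) ≤ x ∧ P n}.ncard := by
  set f : Finset ℕ → ℕ := fun S => ∑ i ∈ S, q ^ i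
  have hsub :
      ↑(((range m).powerset.erase ∅).image f) ⊆ {n : ℕ | 0 < n ∧ (n : ℝ) ≤ x ∧ P n} := by
    simp only [coe_image, Set.image_subset_iff]
    intro S hS
    simp only [mem_coe, mem_erase, mem_powerset, ne_eq] at hS
    have hlt : f S < q ^ m := Nat.geomSum_lt hq fun k hk => mem_range.1 (hS.2 hk)
    refine ⟨sum_pos (fun i _ => by positivity) (nonempty_iff_ne_empty.2 hS.1), ?_, hP S⟩
    exact le_trans (by exact_mod_cast hlt.le) hx
  have hfin : {n : ℕ | 0 < n ∧ (n : ℝ) ≤ x ∧ P n}.Finite :=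
    (Set.finite_Iic ⌊x⌋₊).subset fun n hn => Nat.le_floor hn.2.1
  calc 2 ^ m - 1 = #(((range m).powerset.erase ∅).image f) := by
        rw [card_image_of_injective _ (geomSum_injective hq), card_erase_of_mem
          (empty_mem_powerset _), card_powerset, card_range]
    _ ≤ _ := by rw [← Set.ncard_coe_finset]; exact Set.ncard_le_ncard hsub hfin

theorem exists_pow_le_and_rpow_logb_div_four_le_two_pow_sub_one {q x : ℝ} (hq : 1 < q)
    (hx : q ≤ x) :
    ∃ m : ℕ, q ^ m ≤ x ∧ x ^ Real.logb q 2 / 4 ≤ 2 ^ m - 1 := by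
  obtain ⟨m, hqm, hxq⟩ := exists_nat_pow_near (hq.le.trans hx) hq
  have hm : 1 ≤ m := by
    by_contra! h
    simp only [Nat.lt_one_iff.1 h, zero_add, pow_one] at hxq
    linarith
  refine ⟨m, hqm, ?_⟩
  have hq0 : 0 < q := by linarith
  have hc : 0 ≤ Real.logb q 2 := Real.logb_nonneg hq one_le_two
  calc x ^ Real.logb q 2 / 4 ≤ (q ^ (m + 1)) ^ Real.logb q 2 / 4 := by
        gcongr; linarith
    _ = 2 ^ (m + 1) / 4 := by
        rw [← Real.rpow_natCast, ← Real.rpow_mul hq0.le, mul_comm, Real.rpow_mul hq0.le,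
          Real.rpow_logb hq0 hq.ne' two_pos, Real.rpow_natCast]
    _ ≤ 2 ^ m - 1 := by
        have : (2 : ℝ) ≤ 2 ^ m := by simpa using pow_le_pow_right₀ one_le_two hm
        rw [pow_succ]; linarith

/-- if `a, b ≥ 2` are multiplicatively dependent, then the number of `n ≤ x`
with `s_a(n) = s_b(n)` is at least `K x^c` for some `c, K > 0` and all large `x`. -/
theorem lower_bound_count_equal_digit_sums_of_mul_dependent
    (a b : ℕ) (ha : 2 ≤ a) (hb : 2 ≤ b)
    (hdep : ∃ r s : ℕ, 0 < r ∧ 0 < s ∧ a ^ r = b ^ s) :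
    ∃ c > (0 : ℝ), ∃ K > (0 : ℝ), ∃ x₀ : ℝ, ∀ x ≥ x₀,
      K * x ^ c ≤
        (({n : ℕ | 0 < n ∧ (n : ℝ) ≤ x ∧
            (Nat.digits a n).sum = (Nat.digits b n).sum}.ncard : ℝ)) := by
  obtain ⟨r, s, hr, hs, hab⟩ := hdep
  have hq : 2 ≤ a ^ r := ha.trans (Nat.le_self_pow hr.ne' a)
  have hq' : (1 : ℝ) < a ^ r := by exact_mod_cast hq
  refine ⟨Real.logb (a ^ r) 2, Real.logb_pos hq' one_lt_two, 1 / 4, by norm_num, a ^ r,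
    fun x hx => ?_⟩
  obtain ⟨m, hqm, hbound⟩ := exists_pow_le_and_rpow_logb_div_four_le_two_pow_sub_one hq' hx
  have hcount := two_pow_sub_one_le_ncard_of_forall_geomSum hq (m := m) (x := x)
    (P := fun n => (a.digits n).sum = (b.digits n).sum)
    (fun S => by rw [Nat.digits_sum_sum_pow_pow ha hr, hab, Nat.digits_sum_sum_pow_pow hb hs])
    (by exact_mod_cast hqm)
  calc 1 / 4 * x ^ Real.logb (a ^ r) 2 ≤ 2 ^ m - 1 := by linarith
    _ = ((2 ^ m - 1 : ℕ) : ℝ) := by rw [Nat.cast_sub Nat.one_le_two_pow]; norm_num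
    _ ≤ _ := by exact_mod_cast hcount
end

section
/- Let a ≥ 2 and k ≥ 1 be integers and let v be a nonzero real number. Then the sum over all integers n with 0 ≤ n < a^k of exp(v · s_a(n)) equals ((e^{av} − 1)/(e^v − 1))^k. -/
lemma sum_exp_aux (a : ℕ) (ha : 2 ≤ a) (v : ℝ) (hv : v ≠ 0) (k : ℕ) :
    ∑ n ∈ Finset.range (a ^ k), Real.exp (v * ((Nat.digits a n).sum : ℝ))
      = ((Real.exp ((a : ℝ) * v) - 1) / (Real.exp v - 1)) ^ k := by
  have hexp : Real.exp v ≠ 1 := by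
    simp [Real.exp_eq_one_iff, hv]
  have hgeom : ∑ r ∈ Finset.range a, Real.exp (v * (r : ℝ))
      = (Real.exp ((a : ℝ) * v) - 1) / (Real.exp v - 1) := by
    rw [Real.exp_nat_mul, ← geom_sum_eq hexp a]
    exact Finset.sum_congr rfl fun r _ => by rw [mul_comm, Real.exp_nat_mul]
  induction k with
  | zero => simp
  | succ k ih =>
    have hkey : ∑ n ∈ Finset.range (a ^ (k + 1)), Real.exp (v * ((Nat.digits a n).sum : ℝ))
        = ∑ p ∈ Finset.range (a ^ k) ×ˢ Finset.range a,
            Real.exp (v * ((Nat.digits a (p.2 + a * p.1)).sum : ℝ)) := by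
      apply Finset.sum_nbij' (i := fun n => (n / a, n % a)) (j := fun p => p.2 + a * p.1)
      · intro n hn
        simp only [Finset.mem_range] at hn
        simp only [Finset.mem_product, Finset.mem_range]
        constructor
        · exact (Nat.div_lt_iff_lt_mul (by omega)).mpr (by rwa [pow_succ] at hn)
        · exact Nat.mod_lt _ (by omega)
      · intro p hp
        simp only [Finset.mem_product, Finset.mem_range] at hp
        simp only [Finset.mem_range, pow_succ]
        calc p.2 + a * p.1 < a + a * p.1 := by omega
          _ ≤ a * (p.1 + 1) := by ring_nf; omega
          _ ≤ a * a ^ k := by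
            apply Nat.mul_le_mul_left
            omega
          _ = a ^ k * a := by ring
      · intro n hn
        exact Nat.mod_add_div n a
      · intro p hp
        simp only [Finset.mem_product, Finset.mem_range] at hp
        have h2 : (p.2 + a * p.1) % a = p.2 := by
          simp [Nat.add_mul_mod_self_left, Nat.mod_eq_of_lt hp.2]
        have h1 : (p.2 + a * p.1) / a = p.1 := by
          rw [Nat.add_mul_div_left _ _ (by omega : 0 < a), Nat.div_eq_of_lt hp.2]
          omega
        simp [h1, h2]
      · intro n hn
        rw [Nat.mod_add_div]
    have hsplit : ∀ m r : ℕ, r < a →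
        Real.exp (v * ((Nat.digits a (r + a * m)).sum : ℝ))
          = Real.exp (v * (r : ℝ)) * Real.exp (v * ((Nat.digits a m).sum : ℝ)) := by
      intro m r hr
      by_cases h0 : r + a * m = 0
      · have h1 : r = 0 ∧ a * m = 0 := by omega
        have hm : m = 0 := by
          rcases Nat.mul_eq_zero.mp h1.2 with h | h
          · omega
          · exact h
        simp [h1.1, hm]
      · have hd : Nat.digits a (r + a * m) = (r + a * m) % a :: Nat.digits a ((r + a * m) / a) :=
          Nat.digits_def' (by omega) (by omega)
        have h2 : (r + a * m) % a = r := by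
          simp [Nat.add_mul_mod_self_left, Nat.mod_eq_of_lt hr]
        have h1 : (r + a * m) / a = m := by
          rw [Nat.add_mul_div_left _ _ (by omega : 0 < a), Nat.div_eq_of_lt hr]
          omega
        rw [hd, h1, h2, List.sum_cons, ← Real.exp_add]
        push_cast
        ring_nf
    rw [hkey, Finset.sum_product]
    have : ∀ m ∈ Finset.range (a ^ k),
        ∑ r ∈ Finset.range a, Real.exp (v * ((Nat.digits a (r + a * m)).sum : ℝ))
        = ((Real.exp ((a : ℝ) * v) - 1) / (Real.exp v - 1))
            * Real.exp (v * ((Nat.digits a m).sum : ℝ)) := by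
      intro m _
      rw [← hgeom, Finset.sum_mul]
      apply Finset.sum_congr rfl
      intro r hr
      exact hsplit m r (Finset.mem_range.mp hr)
    rw [Finset.sum_congr rfl this, ← Finset.mul_sum, ih, pow_succ]
    ring

/-- `∑_{0 ≤ n < a^k} e^{v s_a(n)} = ((e^{av}-1)/(e^v-1))^k`. -/
theorem sum_exp_digit_sum_eq
    (a : ℕ) (ha : 2 ≤ a) (k : ℕ) (hk : 1 ≤ k) (v : ℝ) (hv : v ≠ 0) :
    ∑ n ∈ Finset.range (a ^ k), Real.exp (v * ((Nat.digits a n).sum : ℝ))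
      = ((Real.exp ((a : ℝ) * v) - 1) / (Real.exp v - 1)) ^ k :=
  sum_exp_aux a ha v hv k
end

section
/- Let b ≥ 2 be an integer, w > 0 a real number, μ a real number, and j a positive integer. Then for every real x with 1 ≤ x ≤ b^j, the number of positive integers n ≤ x with s_b(n) < μ is at most e^{wμ} · ((1 − e^{−wb})/(1 − e^{−w}))^j. -/
open Finset

private lemma sum_digits_add_mul (b : ℕ) (hb : 2 ≤ b) (a m : ℕ) (ha : a < b) :
    (Nat.digits b (a + b * m)).sum = a + (Nat.digits b m).sum := by
  rcases Nat.eq_zero_or_pos (a + b * m) with h | h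
  · have ha0 : a = 0 := by omega
    have hm0 : m = 0 := by nlinarith
    simp [ha0, hm0]
  · rw [Nat.digits_def' (by omega : 1 < b) h]
    have h1 : (a + b * m) % b = a := by
      rw [Nat.add_mul_mod_self_left, Nat.mod_eq_of_lt ha]
    have h2 : (a + b * m) / b = m := by
      rw [Nat.add_mul_div_left _ _ (by omega : 0 < b), Nat.div_eq_of_lt ha]
      omega
    simp [h1, h2]

private lemma sum_exp_digits (b : ℕ) (hb : 2 ≤ b) (w : ℝ) (j : ℕ) :
    ∑ n ∈ range (b ^ j), Real.exp (-w * ((Nat.digits b n).sum : ℝ))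
      = (∑ d ∈ range b, Real.exp (-w * (d : ℝ))) ^ j := by
  induction j with
  | zero => simp
  | succ j ih =>
    rw [pow_succ', pow_succ']
    have key : ∑ n ∈ range (b * b ^ j), Real.exp (-w * ((Nat.digits b n).sum : ℝ))
        = ∑ p ∈ range b ×ˢ range (b ^ j),
            Real.exp (-w * ((Nat.digits b (p.1 + b * p.2)).sum : ℝ)) := by
      apply Finset.sum_nbij' (fun n => (n % b, n / b)) (fun p => p.1 + b * p.2)
      · intro n hn
        simp only [mem_range, mem_product] at *
        refine ⟨Nat.mod_lt _ (by omega), ?_⟩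
        exact (Nat.div_lt_iff_lt_mul (by omega)).mpr (by rw [mul_comm]; exact hn)
      · intro p hp
        simp only [mem_range, mem_product] at *
        have h1 : p.2 + 1 ≤ b ^ j := hp.2
        have h2 : b * (p.2 + 1) ≤ b * b ^ j := Nat.mul_le_mul_left b h1
        have h3 : b * (p.2 + 1) = b * p.2 + b := by ring
        omega
      · intro n hn
        exact Nat.mod_add_div n b
      · intro p hp
        simp only [mem_range, mem_product] at hp
        have h1 : (p.1 + b * p.2) % b = p.1 := by
          rw [Nat.add_mul_mod_self_left, Nat.mod_eq_of_lt hp.1]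
        have h2 : (p.1 + b * p.2) / b = p.2 := by
          rw [Nat.add_mul_div_left _ _ (show 0 < b by omega), Nat.div_eq_of_lt hp.1, Nat.zero_add]
        simp [h1, h2]
      · intro n hn
        rw [Nat.mod_add_div]
    rw [key, Finset.sum_product]
    have : ∀ a ∈ range b, ∀ m ∈ range (b ^ j),
        Real.exp (-w * ((Nat.digits b (a + b * m)).sum : ℝ))
          = Real.exp (-w * (a : ℝ)) * Real.exp (-w * ((Nat.digits b m).sum : ℝ)) := by
      intro a ha m hm
      rw [sum_digits_add_mul b hb a m (mem_range.mp ha), ← Real.exp_add]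
      push_cast
      ring_nf
    calc ∑ a ∈ range b, ∑ m ∈ range (b ^ j),
          Real.exp (-w * ((Nat.digits b (a + b * m)).sum : ℝ))
        = ∑ a ∈ range b, ∑ m ∈ range (b ^ j),
            Real.exp (-w * (a : ℝ)) * Real.exp (-w * ((Nat.digits b m).sum : ℝ)) := by
          apply Finset.sum_congr rfl; intro a ha
          exact Finset.sum_congr rfl (fun m hm => this a ha m hm)
      _ = (∑ a ∈ range b, Real.exp (-w * (a : ℝ)))
            * ∑ m ∈ range (b ^ j), Real.exp (-w * ((Nat.digits b m).sum : ℝ)) := by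
          rw [← Finset.sum_mul_sum]
      _ = _ := by rw [ih]

private lemma geom_exp (b : ℕ) (w : ℝ) (hw : 0 < w) :
    ∑ d ∈ range b, Real.exp (-w * (d : ℝ))
      = (1 - Real.exp (-w * (b : ℝ))) / (1 - Real.exp (-w)) := by
  have hr : Real.exp (-w) ≠ 1 := by
    have : Real.exp (-w) < 1 := Real.exp_lt_one_iff.mpr (by linarith)
    linarith
  have h1 : ∀ d : ℕ, Real.exp (-w * (d : ℝ)) = Real.exp (-w) ^ d := by
    intro d
    rw [← Real.exp_nat_mul]
    ring_nf
  have h2 := geom_sum_eq hr b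
  calc ∑ d ∈ range b, Real.exp (-w * (d : ℝ))
      = ∑ d ∈ range b, Real.exp (-w) ^ d := Finset.sum_congr rfl (fun d _ => h1 d)
    _ = (Real.exp (-w) ^ b - 1) / (Real.exp (-w) - 1) := h2
    _ = (1 - Real.exp (-w) ^ b) / (1 - Real.exp (-w)) := by
        rw [← neg_div_neg_eq]; ring_nf
    _ = _ := by rw [← h1 b]

/-- Chernoff-type upper bound for the number of `n ≤ x` with `s_b(n) < μ`. -/
theorem upper_bound_count_digit_sum_lt
    (b : ℕ) (hb : 2 ≤ b) (w : ℝ) (hw : 0 < w) (μ : ℝ) (j : ℕ) (hj : 1 ≤ j)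
    (x : ℝ) (hx1 : 1 ≤ x) (hx2 : x ≤ (b : ℝ) ^ j) :
    (({n : ℕ | 0 < n ∧ (n : ℝ) ≤ x ∧ ((Nat.digits b n).sum : ℝ) < μ}.ncard : ℝ))
      ≤ Real.exp (w * μ) * ((1 - Real.exp (-w * (b : ℝ))) / (1 - Real.exp (-w))) ^ j := by
  classical
  set f : ℕ → ℝ := fun n => Real.exp (-w * ((Nat.digits b n).sum : ℝ)) with hf
  set T : Finset ℕ := (Finset.Icc 1 (b ^ j)).filter
    (fun n => (n : ℝ) ≤ x ∧ ((Nat.digits b n).sum : ℝ) < μ) with hT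
  have hset : {n : ℕ | 0 < n ∧ (n : ℝ) ≤ x ∧ ((Nat.digits b n).sum : ℝ) < μ} = ↑T := by
    ext n
    simp only [hT, Finset.coe_filter, Set.mem_setOf_eq, Finset.mem_Icc]
    constructor
    · rintro ⟨h1, h2, h3⟩
      refine ⟨⟨h1, ?_⟩, h2, h3⟩
      exact_mod_cast le_trans h2 hx2
    · rintro ⟨⟨h1, _⟩, h2, h3⟩; exact ⟨h1, h2, h3⟩
  rw [hset, Set.ncard_coe_finset]
  have step1 : (T.card : ℝ) ≤ Real.exp (w * μ) * ∑ n ∈ T, f n := by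
    rw [Finset.mul_sum, Finset.card_eq_sum_ones]
    push_cast
    apply Finset.sum_le_sum
    intro n hn
    simp only [hT, Finset.mem_filter] at hn
    rw [hf, ← Real.exp_add]
    rw [show (1:ℝ) = Real.exp 0 by simp]
    apply Real.exp_le_exp.mpr
    have hlt : ((Nat.digits b n).sum : ℝ) < μ := hn.2.2
    nlinarith
  have step2 : ∑ n ∈ T, f n ≤ ∑ n ∈ range (b ^ j), f n := by
    have hpos : ∀ n, 0 ≤ f n := fun n => (Real.exp_pos _).le
    have hsub : ∑ n ∈ T, f n ≤ ∑ n ∈ Finset.Icc 1 (b ^ j), f n :=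
      Finset.sum_le_sum_of_subset_of_nonneg (Finset.filter_subset _ _)
        (fun n _ _ => hpos n)
    have hIcc : Finset.Icc 1 (b ^ j) = (Finset.range (b ^ j + 1)).erase 0 := by
      ext n
      simp [Nat.lt_succ_iff]
      omega
    have herase : ∑ n ∈ (Finset.range (b ^ j + 1)).erase 0, f n
        = ∑ n ∈ Finset.range (b ^ j + 1), f n - f 0 := by
      rw [eq_sub_iff_add_eq, add_comm]
      exact Finset.add_sum_erase _ f (by simp)
    have hf0 : f 0 = 1 := by simp [hf]
    have hlast : f (b ^ j) ≤ 1 := by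
      rw [hf]
      rw [show (1:ℝ) = Real.exp 0 by simp]
      apply Real.exp_le_exp.mpr
      have : (0:ℝ) ≤ ((Nat.digits b (b ^ j)).sum : ℝ) := by positivity
      nlinarith
    calc ∑ n ∈ T, f n ≤ ∑ n ∈ Finset.Icc 1 (b ^ j), f n := hsub
      _ = ∑ n ∈ Finset.range (b ^ j + 1), f n - f 0 := by rw [hIcc, herase]
      _ = ∑ n ∈ Finset.range (b ^ j), f n + f (b ^ j) - 1 := by
          rw [Finset.sum_range_succ, hf0]
      _ ≤ ∑ n ∈ Finset.range (b ^ j), f n := by linarith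
  have key : ∑ n ∈ range (b ^ j), f n
      = ((1 - Real.exp (-w * (b : ℝ))) / (1 - Real.exp (-w))) ^ j := by
    rw [hf, sum_exp_digits b hb w j, geom_exp b w hw]
  calc ((T.card : ℝ)) ≤ Real.exp (w * μ) * ∑ n ∈ T, f n := step1
    _ ≤ Real.exp (w * μ) * ∑ n ∈ range (b ^ j), f n := by
        apply mul_le_mul_of_nonneg_left step2 (Real.exp_pos _).le
    _ = _ := by rw [key]
end

section
/- For every real ρ with 0 ≤ ρ ≤ 1 and every real t, one has |1 − ρ + ρ e^{2πit}| ≤ exp(−8ρ(1−ρ)‖t‖²), where ‖t‖ denotes the distance from t to the nearest integer. -/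
/-!
A direct computation gives `|1 - ρ + ρ e^{iθ}|² = 1 - 4ρ(1-ρ) sin²(θ/2)`. With `θ = 2πt`,
the quantity `|sin(πt)|` only depends on the distance `‖t‖ ≤ 1/2` to the nearest integer,
and Jordan's inequality gives `|sin(πt)| ≥ 2‖t‖`. Hence the squared modulus is at most `1 - 16ρ(1-ρ)‖t‖² ≤ exp(-16ρ(1-ρ)‖t‖²)`.
-/

open Real

lemma norm_one_sub_add_mul_exp_mul_I_sq (ρ θ : ℝ) :
    ‖1 - (ρ : ℂ) + ρ * Complex.exp (θ * Complex.I)‖ ^ 2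
      = 1 - 4 * ρ * (1 - ρ) * sin (θ / 2) ^ 2 := by
  have hsplit : 1 - (ρ : ℂ) + ρ * Complex.exp (θ * Complex.I)
      = ((1 - ρ + ρ * cos θ : ℝ) : ℂ) + ((ρ * sin θ : ℝ) : ℂ) * Complex.I := by
    rw [Complex.exp_mul_I, ← Complex.ofReal_cos, ← Complex.ofReal_sin]
    push_cast
    ring
  have hcos : cos θ = 1 - 2 * sin (θ / 2) ^ 2 := by
    have hdouble : cos θ = cos (θ / 2) ^ 2 - sin (θ / 2) ^ 2 := by
      rw [← cos_two_mul', mul_div_cancel₀ θ two_ne_zero]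
    linear_combination hdouble + cos_sq_add_sin_sq (θ / 2)
  rw [hsplit, Complex.sq_norm, Complex.normSq_add_mul_I]
  linear_combination ρ ^ 2 * sin_sq_add_cos_sq θ + 2 * ρ * (1 - ρ) * hcos

lemma two_mul_abs_sub_round_le_abs_sin_pi_mul (t : ℝ) :
    2 * |t - round t| ≤ |sin (π * t)| := by
  have hperiodic : |sin (π * t)| = |sin (π * (t - round t))| := by
    rw [mul_sub, mul_comm π (round t : ℝ), sin_sub_int_mul_pi, abs_mul,
      abs_neg_one_zpow, one_mul]
  have hhalf : |π * (t - round t)| ≤ π / 2 := by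
    rw [abs_mul, abs_of_pos pi_pos]
    linarith [mul_le_mul_of_nonneg_left (abs_sub_round t) pi_pos.le]
  have hjordan := mul_abs_le_abs_sin hhalf
  rw [abs_mul, abs_of_pos pi_pos, ← mul_assoc, div_mul_cancel₀ _ pi_ne_zero] at hjordan
  rwa [hperiodic]

lemma le_exp_of_sq_le_one_add_two_mul {x y : ℝ} (hx : 0 ≤ x) (h : x ^ 2 ≤ 1 + 2 * y) :
    x ≤ exp y := by
  refine (pow_le_pow_iff_left₀ hx (exp_nonneg y) two_ne_zero).mp ?_
  calc x ^ 2 ≤ 1 + 2 * y := h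
    _ ≤ exp (2 * y) := by linarith [add_one_le_exp (2 * y)]
    _ = exp y ^ 2 := by rw [sq, ← exp_add, two_mul]

/-- `|1 - ρ + ρ e^{2πit}| ≤ exp(-8ρ(1-ρ)‖t‖²)`, where `‖t‖ = |t - round t|`
is the distance from `t` to the nearest integer. -/
theorem abs_one_sub_rho_add_rho_exp_le
    (ρ t : ℝ) (hρ0 : 0 ≤ ρ) (hρ1 : ρ ≤ 1) :
    ‖1 - (ρ : ℂ) + (ρ : ℂ) * Complex.exp (2 * Real.pi * Complex.I * (t : ℂ))‖
      ≤ Real.exp (-8 * ρ * (1 - ρ) * |t - round t| ^ 2) := by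
  apply le_exp_of_sq_le_one_add_two_mul (norm_nonneg _)
  have hθ : 2 * π * Complex.I * t = ((2 * π * t : ℝ) : ℂ) * Complex.I := by push_cast; ring
  rw [hθ, norm_one_sub_add_mul_exp_mul_I_sq, show 2 * π * t / 2 = π * t by ring]
  have hsin : 4 * |t - round t| ^ 2 ≤ sin (π * t) ^ 2 := by
    have := pow_le_pow_left₀ (by positivity) (two_mul_abs_sub_round_le_abs_sin_pi_mul t) 2
    rwa [sq_abs, mul_pow, show (2 : ℝ) ^ 2 = 4 by norm_num] at this
  have hρ : 0 ≤ ρ * (1 - ρ) := mul_nonneg hρ0 (sub_nonneg.2 hρ1)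
  nlinarith [mul_le_mul_of_nonneg_left hsin hρ]
end

section
/- Let α > 0 be a real number with binary expansion α = Σ_{m ≥ m₀} ε_m(α) 2^{−m} where ε_m(α) ∈ {0, 1} (taking the expansion that does not end in an infinite tail of digits 1). If j is an integer with ε_{2j}(α) + ε_{2j+1}(α) = 1, then the fractional part of 2^{2j−1} α lies in [1/4, 3/4], and consequently ‖2^{2j−1} α‖ ≥ 1/4, where ‖t‖ denotes the distance from t to the nearest integer. -/
set_option maxHeartbeats 1000000

private lemma aux_zpow_split (c : ℤ) (m : ℕ) :
    (2 : ℝ) ^ (c - (m : ℤ)) = (2 : ℝ) ^ c * (1 / 2 : ℝ) ^ m := by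
  rw [zpow_sub₀ (by norm_num : (2:ℝ) ≠ 0), zpow_natCast, div_eq_mul_inv, one_div, inv_pow]

private lemma aux_summable (ε : ℤ → ℕ) (hdig : ∀ m : ℤ, ε m < 2) (M c : ℤ) :
    Summable (fun m : ℕ => (ε (M + m) : ℝ) * (2 : ℝ) ^ (c - (m : ℤ))) := by
  have hg : Summable (fun m : ℕ => (2 : ℝ) ^ c * (1 / 2 : ℝ) ^ m) :=
    (summable_geometric_of_lt_one (by norm_num) (by norm_num)).mul_left _
  refine Summable.of_nonneg_of_le (fun m => by positivity) (fun m => ?_) hg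
  rw [← aux_zpow_split]
  have h1 : (ε (M + m) : ℝ) ≤ 1 := by
    have := hdig (M + m); exact_mod_cast Nat.lt_succ_iff.mp this
  calc (ε (M + m) : ℝ) * (2 : ℝ) ^ (c - (m : ℤ))
      ≤ 1 * (2 : ℝ) ^ (c - (m : ℤ)) := by
        apply mul_le_mul_of_nonneg_right h1 (by positivity)
    _ = (2 : ℝ) ^ (c - (m : ℤ)) := one_mul _

/-- if the binary expansion of `α > 0` (not ending in an infinite tail of
digits `1`) satisfies `ε_{2j}(α) + ε_{2j+1}(α) = 1`, then the fractional part of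
`2^{2j-1} α` lies in `[1/4, 3/4]`, whence `‖2^{2j-1} α‖ ≥ 1/4`. -/
theorem fract_mem_of_binary_digit_pair
    (α : ℝ) (hα : 0 < α)
    (m₀ : ℤ) (ε : ℤ → ℕ)
    (hdig : ∀ m : ℤ, ε m < 2)
    (hzero : ∀ m : ℤ, m < m₀ → ε m = 0)
    (hsum : α = ∑' m : ℕ, (ε (m₀ + m) : ℝ) * (2 : ℝ) ^ (-(m₀ + (m : ℤ))))
    (htail : ∀ M : ℤ, ∃ m : ℤ, M ≤ m ∧ ε m ≠ 1)
    (j : ℤ) (hj : ε (2 * j) + ε (2 * j + 1) = 1) :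
    Int.fract ((2 : ℝ) ^ (2 * j - 1) * α) ∈ Set.Icc (1 / 4 : ℝ) (3 / 4 : ℝ) ∧
      (1 / 4 : ℝ) ≤ |(2 : ℝ) ^ (2 * j - 1) * α - round ((2 : ℝ) ^ (2 * j - 1) * α)| := by
  set M : ℤ := min m₀ (2 * j) with hMdef
  have hMm₀ : M ≤ m₀ := min_le_left _ _
  have hM2j : M ≤ 2 * j := min_le_right _ _
  -- rewrite hsum with base point M
  have hsumM : α = ∑' m : ℕ, (ε (M + m) : ℝ) * (2 : ℝ) ^ (-M - (m : ℤ)) := by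
    rw [hsum]
    set d : ℕ := (m₀ - M).toNat with hddef
    have hd : (d : ℤ) = m₀ - M := Int.toNat_of_nonneg (by omega)
    have hS := aux_summable ε hdig M (-M)
    rw [← Summable.sum_add_tsum_nat_add d hS]
    have h1 : ∑ i ∈ Finset.range d, (ε (M + i) : ℝ) * (2 : ℝ) ^ (-M - (i : ℤ)) = 0 := by
      apply Finset.sum_eq_zero
      intro i hi
      have : ε (M + i) = 0 := hzero _ (by
        have := Finset.mem_range.mp hi; omega)
      rw [this]; simp
    rw [h1, zero_add]
    apply tsum_congr
    intro m
    have he : m₀ + (m : ℤ) = M + ((m + d : ℕ) : ℤ) := by push_cast; omega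
    rw [he, show -(M + ((m + d : ℕ) : ℤ)) = -M - ((m + d : ℕ) : ℤ) by ring]
  -- the value x = 2^(2j-1) α as a tsum
  set x : ℝ := (2 : ℝ) ^ (2 * j - 1) * α with hxdef
  have hxsum : x = ∑' m : ℕ, (ε (M + m) : ℝ) * (2 : ℝ) ^ (2 * j - 1 - M - (m : ℤ)) := by
    rw [hxdef, hsumM, ← tsum_mul_left]
    apply tsum_congr
    intro m
    rw [← mul_assoc, mul_comm ((2:ℝ) ^ (2*j-1)) _, mul_assoc]
    congr 1
    rw [← zpow_add₀ (by norm_num : (2:ℝ) ≠ 0)]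
    congr 1; ring
  set N : ℕ := (2 * j - M).toNat with hNdef
  have hN : (N : ℤ) = 2 * j - M := Int.toNat_of_nonneg (by omega)
  have hSx := aux_summable ε hdig M (2 * j - 1 - M)
  have hsplit := Summable.sum_add_tsum_nat_add N hSx
  -- the tail T
  set T : ℝ := ∑' k : ℕ, (ε (2 * j + k) : ℝ) * (2 : ℝ) ^ (-1 - (k : ℤ)) with hTdef
  have hST := aux_summable ε hdig (2 * j) (-1)
  have htails : (∑' k : ℕ, (ε (M + ((k + N : ℕ) : ℤ)) : ℝ) * (2 : ℝ) ^ (2 * j - 1 - M - ((k + N : ℕ) : ℤ))) = T := by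
    apply tsum_congr
    intro k
    have h1 : M + ((k + N : ℕ) : ℤ) = 2 * j + k := by push_cast; omega
    have h2 : 2 * j - 1 - M - ((k + N : ℕ) : ℤ) = -1 - (k : ℤ) := by push_cast; omega
    rw [h1, h2]
  -- head is an integer
  obtain ⟨z, hz⟩ : ∃ z : ℤ,
      (∑ i ∈ Finset.range N, (ε (M + i) : ℝ) * (2 : ℝ) ^ (2 * j - 1 - M - (i : ℤ))) = z := by
    refine ⟨∑ i ∈ Finset.range N, (ε (M + i) : ℤ) * 2 ^ (2 * j - 1 - M - (i : ℤ)).toNat, ?_⟩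
    push_cast
    apply Finset.sum_congr rfl
    intro i hi
    congr 1
    rw [← zpow_natCast (2:ℝ), Int.toNat_of_nonneg]
    have : (i : ℤ) < N := by exact_mod_cast Finset.mem_range.mp hi
    omega
  have hxT : x = (z : ℝ) + T := by
    rw [hxsum, ← hsplit, hz, htails]
  -- analyse T
  have hT2 := Summable.sum_add_tsum_nat_add 2 hST
  set R : ℝ := ∑' k : ℕ, (ε (2 * j + ((k + 2 : ℕ) : ℤ)) : ℝ) * (2 : ℝ) ^ (-1 - ((k + 2 : ℕ) : ℤ)) with hRdef
  have hTform : T = (ε (2 * j) : ℝ) * (1 / 2) + (ε (2 * j + 1) : ℝ) * (1 / 4) + R := by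
    rw [hTdef, ← hT2]
    have : ∑ i ∈ Finset.range 2, (ε (2 * j + i) : ℝ) * (2 : ℝ) ^ (-1 - (i : ℤ)) =
        (ε (2 * j) : ℝ) * (1 / 2) + (ε (2 * j + 1) : ℝ) * (1 / 4) := by
      rw [Finset.sum_range_succ, Finset.sum_range_one]
      norm_num
    rw [this]
  have hR0 : 0 ≤ R := by
    rw [hRdef]
    apply tsum_nonneg
    intro k; positivity
  have hR14 : R ≤ 1 / 4 := by
    have hgs : Summable (fun k : ℕ => (2:ℝ) ^ (-3 : ℤ) * (1/2 : ℝ) ^ k) :=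
      (summable_geometric_of_lt_one (by norm_num) (by norm_num)).mul_left _
    have hle : R ≤ ∑' k : ℕ, (2:ℝ) ^ (-3 : ℤ) * (1/2 : ℝ) ^ k := by
      rw [hRdef]
      refine Summable.tsum_le_tsum (fun k => ?_) ((summable_nat_add_iff 2).mpr hST) hgs
      have h1 : (ε (2 * j + ((k + 2 : ℕ) : ℤ)) : ℝ) ≤ 1 := by
        have := hdig (2 * j + ((k + 2 : ℕ) : ℤ)); exact_mod_cast Nat.lt_succ_iff.mp this
      have h2 : (-1 - ((k + 2 : ℕ) : ℤ)) = (-3 : ℤ) - (k : ℤ) := by push_cast; ring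
      rw [h2, aux_zpow_split]
      calc (ε (2 * j + ((k + 2 : ℕ) : ℤ)) : ℝ) * ((2:ℝ)^(-3:ℤ) * (1/2)^k)
          ≤ 1 * ((2:ℝ)^(-3:ℤ) * (1/2)^k) := by
            apply mul_le_mul_of_nonneg_right h1 (by positivity)
        _ = (2:ℝ)^(-3:ℤ) * (1/2)^k := one_mul _
    calc R ≤ ∑' k : ℕ, (2:ℝ) ^ (-3 : ℤ) * (1/2 : ℝ) ^ k := hle
      _ = (2:ℝ) ^ (-3:ℤ) * (1 - 1/2)⁻¹ := by
          rw [tsum_mul_left, tsum_geometric_of_lt_one (by norm_num) (by norm_num)]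
      _ = 1 / 4 := by norm_num
  -- digit cases
  have hTbounds : 1 / 4 ≤ T ∧ T ≤ 3 / 4 := by
    have h0 := hdig (2 * j)
    have h1 := hdig (2 * j + 1)
    have hcase : (ε (2*j) = 1 ∧ ε (2*j+1) = 0) ∨ (ε (2*j) = 0 ∧ ε (2*j+1) = 1) := by omega
    rcases hcase with ⟨ha, hb⟩ | ⟨ha, hb⟩ <;>
      · rw [hTform, ha, hb]
        push_cast
        constructor <;> linarith
  have hfx : Int.fract x = T := by
    rw [hxT, Int.fract_intCast_add, Int.fract_eq_self.mpr ⟨by linarith [hTbounds.1], by linarith [hTbounds.2]⟩]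
  constructor
  · rw [hfx]; exact ⟨hTbounds.1, hTbounds.2⟩
  · rw [abs_sub_round_eq_min, hfx]
    rcases hTbounds with ⟨h1, h2⟩
    simp only [le_min_iff]
    constructor <;> linarith
end

section
/- Let b ≥ 3 and κ ≥ 1 be integers. Then Σ_{0 ≤ j ≤ κ/(2b)} C(κ, j) (b−1)^{κ−j} ≤ b^κ e^{−κ/(7b)}, where the sum runs over integers j with 0 ≤ j ≤ κ/(2b) and C(κ, j) denotes the binomial coefficient. -/
/-- `∑_{0 ≤ j ≤ κ/(2b)} C(κ,j)(b-1)^{κ-j} ≤ b^κ e^{-κ/(7b)}` for `b ≥ 3`. -/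
theorem binomial_tail_sum_le_of_three_le
    (b κ : ℕ) (hb : 3 ≤ b) (hκ : 1 ≤ κ) :
    ∑ j ∈ Finset.range (κ / (2 * b) + 1), (κ.choose j : ℝ) * ((b : ℝ) - 1) ^ (κ - j)
      ≤ (b : ℝ) ^ κ * Real.exp (-(κ : ℝ) / (7 * b)) := by
  set m := κ / (2 * b) with hm
  have hB : (3 : ℝ) ≤ (b : ℝ) := by exact_mod_cast hb
  have hB0 : (0 : ℝ) < (b : ℝ) := by linarith
  have hκ0 : (0 : ℝ) < (κ : ℝ) := by exact_mod_cast hκ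
  have hmκ : m ≤ κ := Nat.div_le_self κ (2 * b)
  have hmr : (m : ℝ) ≤ (κ : ℝ) / (2 * (b : ℝ)) := by
    have := Nat.cast_div_le (α := ℝ) (m := κ) (n := 2 * b)
    rw [hm]
    push_cast at this ⊢
    exact this
  -- Step 1: bound the sum by `2^m * (b - 1/2)^κ`
  have step1 : ∑ j ∈ Finset.range (m + 1), (κ.choose j : ℝ) * ((b : ℝ) - 1) ^ (κ - j)
      ≤ 2 ^ m * ((b : ℝ) - 1 / 2) ^ κ := by
    have hsum : ((1 : ℝ) / 2 + ((b : ℝ) - 1)) ^ κ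
        = ∑ j ∈ Finset.range (κ + 1),
            ((1 : ℝ) / 2) ^ j * ((b : ℝ) - 1) ^ (κ - j) * (κ.choose j : ℝ) :=
      add_pow _ _ κ
    have hnn : ∀ j ∈ Finset.range (κ + 1),
        0 ≤ ((1 : ℝ) / 2) ^ j * ((b : ℝ) - 1) ^ (κ - j) * (κ.choose j : ℝ) := by
      intro j _
      have h1 : (0 : ℝ) ≤ ((1 : ℝ) / 2) ^ j := by positivity
      have h2 : (0 : ℝ) ≤ ((b : ℝ) - 1) ^ (κ - j) := by
        apply pow_nonneg; linarith
      have h3 : (0 : ℝ) ≤ (κ.choose j : ℝ) := Nat.cast_nonneg _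
      positivity
    calc ∑ j ∈ Finset.range (m + 1), (κ.choose j : ℝ) * ((b : ℝ) - 1) ^ (κ - j)
        ≤ ∑ j ∈ Finset.range (m + 1),
            2 ^ m * (((1 : ℝ) / 2) ^ j * ((b : ℝ) - 1) ^ (κ - j) * (κ.choose j : ℝ)) := by
          refine Finset.sum_le_sum fun j hj => ?_
          have hj' : j ≤ m := Nat.lt_succ_iff.mp (Finset.mem_range.mp hj)
          have h2 : (1 : ℝ) ≤ 2 ^ m * ((1 : ℝ) / 2) ^ j := by
            have hpow : (2 : ℝ) ^ j ≤ 2 ^ m := pow_le_pow_right₀ (by norm_num) hj'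
            have hj0 : (0 : ℝ) < (2 : ℝ) ^ j := by positivity
            have h := (one_le_div hj0).mpr hpow
            rw [div_eq_mul_inv] at h
            rwa [one_div, inv_pow]
          have hX : (0 : ℝ) ≤ ((b : ℝ) - 1) ^ (κ - j) := by
            apply pow_nonneg; linarith
          have hC : (0 : ℝ) ≤ (κ.choose j : ℝ) := Nat.cast_nonneg _
          have := mul_le_mul_of_nonneg_right h2 (mul_nonneg hC hX)
          calc (κ.choose j : ℝ) * ((b : ℝ) - 1) ^ (κ - j)
              = 1 * ((κ.choose j : ℝ) * ((b : ℝ) - 1) ^ (κ - j)) := by ring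
            _ ≤ (2 ^ m * ((1 : ℝ) / 2) ^ j) * ((κ.choose j : ℝ) * ((b : ℝ) - 1) ^ (κ - j)) := by
                nlinarith
            _ = 2 ^ m * (((1 : ℝ) / 2) ^ j * ((b : ℝ) - 1) ^ (κ - j) * (κ.choose j : ℝ)) := by
                ring
      _ = 2 ^ m * ∑ j ∈ Finset.range (m + 1),
            ((1 : ℝ) / 2) ^ j * ((b : ℝ) - 1) ^ (κ - j) * (κ.choose j : ℝ) := by
          rw [Finset.mul_sum]
      _ ≤ 2 ^ m * ∑ j ∈ Finset.range (κ + 1),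
            ((1 : ℝ) / 2) ^ j * ((b : ℝ) - 1) ^ (κ - j) * (κ.choose j : ℝ) := by
          apply mul_le_mul_of_nonneg_left _ (by positivity)
          apply Finset.sum_le_sum_of_subset_of_nonneg
          · exact Finset.range_subset_range.mpr (by omega)
          · intro j hj _; exact hnn j hj
      _ = 2 ^ m * ((1 : ℝ) / 2 + ((b : ℝ) - 1)) ^ κ := by rw [hsum]
      _ = 2 ^ m * ((b : ℝ) - 1 / 2) ^ κ := by ring_nf
  -- Step 2: `2^m * (b - 1/2)^κ ≤ b^κ * exp(-κ/(7b))`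
  have step2 : (2 : ℝ) ^ m * ((b : ℝ) - 1 / 2) ^ κ
      ≤ (b : ℝ) ^ κ * Real.exp (-(κ : ℝ) / (7 * b)) := by
    have h1 : ((b : ℝ) - 1 / 2) ^ κ ≤ (b : ℝ) ^ κ * Real.exp (-(κ : ℝ) / (2 * b)) := by
      have hx : (b : ℝ) - 1 / 2 ≤ (b : ℝ) * Real.exp (-1 / (2 * b)) := by
        have h := Real.add_one_le_exp (-1 / (2 * (b : ℝ)))
        have := mul_le_mul_of_nonneg_left h (le_of_lt hB0)
        have hb2 : (b : ℝ) * (-1 / (2 * (b : ℝ)) + 1) = (b : ℝ) - 1 / 2 := by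
          field_simp; ring
        linarith [hb2 ▸ this]
      calc ((b : ℝ) - 1 / 2) ^ κ ≤ ((b : ℝ) * Real.exp (-1 / (2 * b))) ^ κ := by
            apply pow_le_pow_left₀ (by linarith) hx
        _ = (b : ℝ) ^ κ * Real.exp (-(κ : ℝ) / (2 * b)) := by
            rw [mul_pow, ← Real.exp_nat_mul]
            congr 1
            ring
    have h2 : (2 : ℝ) ^ m ≤ Real.exp ((κ : ℝ) / (2 * b) * Real.log 2) := by
      have e1 : (2 : ℝ) ^ m = Real.exp ((m : ℝ) * Real.log 2) := by
        rw [Real.exp_nat_mul, Real.exp_log (by norm_num)]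
      rw [e1]
      apply Real.exp_le_exp.mpr
      have hlog : (0 : ℝ) ≤ Real.log 2 := Real.log_nonneg (by norm_num)
      exact mul_le_mul_of_nonneg_right hmr hlog
    have hkey : (κ : ℝ) / (2 * b) * Real.log 2 + -(κ : ℝ) / (2 * b) ≤ -(κ : ℝ) / (7 * b) := by
      have hl2 : Real.log 2 < 0.6931471808 := Real.log_two_lt_d9
      have ht : (0 : ℝ) < (κ : ℝ) / (b : ℝ) := by positivity
      have e2 : (κ : ℝ) / (2 * (b : ℝ)) = (κ : ℝ) / (b : ℝ) * (1 / 2) := by ring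
      have e3 : -(κ : ℝ) / (2 * (b : ℝ)) = (κ : ℝ) / (b : ℝ) * (-1 / 2) := by ring
      have e4 : -(κ : ℝ) / (7 * (b : ℝ)) = (κ : ℝ) / (b : ℝ) * (-1 / 7) := by ring
      rw [e2, e3, e4]
      nlinarith
    calc (2 : ℝ) ^ m * ((b : ℝ) - 1 / 2) ^ κ
        ≤ Real.exp ((κ : ℝ) / (2 * b) * Real.log 2)
            * ((b : ℝ) ^ κ * Real.exp (-(κ : ℝ) / (2 * b))) := by
          exact mul_le_mul h2 h1 (pow_nonneg (by linarith) _) (le_of_lt (Real.exp_pos _))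
      _ = (b : ℝ) ^ κ * Real.exp ((κ : ℝ) / (2 * b) * Real.log 2 + -(κ : ℝ) / (2 * b)) := by
          rw [Real.exp_add]; ring
      _ ≤ (b : ℝ) ^ κ * Real.exp (-(κ : ℝ) / (7 * b)) := by
          apply mul_le_mul_of_nonneg_left (Real.exp_le_exp.mpr hkey) (by positivity)
  exact step1.trans step2
end

section
/- Let κ be a positive even integer. Then 2^{κ/2} · Σ_{0 ≤ j ≤ κ/8} C(κ/2, j) ≤ 2^{11κ/12}, where the sum runs over integers j with 0 ≤ j ≤ κ/8 and C(κ/2, j) denotes the binomial coefficient. -/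
/-!
Since `xᵐ ≤ xʲ` for `j ≤ m` and `0 ≤ x ≤ 1`, the binomial theorem gives the Chernoff-type bound
`xᵐ ∑_{j ≤ m} C(n, j) ≤ (1 + x)ⁿ`. With `n = κ/2`, `m = κ/8 ≤ n/4` and `x = 1/3`, the left-hand
side of the theorem is at most `(8/3)ⁿ 3^{n/4}`, and `(8/3)¹² · 3³ = 2³⁶/3⁹ ≤ 2²²` since
`2¹⁴ ≤ 3⁹`; as `2n ≤ κ` this is the bound `2^{11κ/12}` after taking twelfth roots.
-/

open Finset

theorem pow_mul_sum_range_choose_le (n m : ℕ) {x : ℝ} (hx₀ : 0 ≤ x) (hx₁ : x ≤ 1) :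
    x ^ m * ∑ j ∈ range (m + 1), (n.choose j : ℝ) ≤ (1 + x) ^ n := by
  have hvanish : ∑ k ∈ range m, x ^ (n + 1 + k) * (n.choose (n + 1 + k) : ℝ) = 0 :=
    sum_eq_zero fun k _ => by rw [Nat.choose_eq_zero_of_lt (by omega), Nat.cast_zero, mul_zero]
  calc x ^ m * ∑ j ∈ range (m + 1), (n.choose j : ℝ)
      ≤ ∑ j ∈ range (m + 1), x ^ j * (n.choose j : ℝ) := by
        rw [mul_sum]
        refine sum_le_sum fun j hj => mul_le_mul_of_nonneg_right ?_ (Nat.cast_nonneg _)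
        exact pow_le_pow_of_le_one hx₀ hx₁ (Nat.lt_succ_iff.mp (mem_range.mp hj))
    _ ≤ ∑ j ∈ range (n + 1 + m), x ^ j * (n.choose j : ℝ) :=
        sum_le_sum_of_subset_of_nonneg (range_subset_range.mpr (by omega))
          fun _ _ _ => by positivity
    _ = (1 + x) ^ n := by
        rw [sum_range_add, hvanish, add_zero, add_comm 1 x, add_pow]
        simp only [one_pow, mul_one]

theorem sum_range_choose_le_three_pow_mul (n m : ℕ) :
    ∑ j ∈ range (m + 1), (n.choose j : ℝ) ≤ 3 ^ m * (4 / 3) ^ n := by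
  have hchernoff := pow_mul_sum_range_choose_le n m (x := 1 / 3) (by norm_num) (by norm_num)
  calc ∑ j ∈ range (m + 1), (n.choose j : ℝ)
      = 3 ^ m * ((1 / 3) ^ m * ∑ j ∈ range (m + 1), (n.choose j : ℝ)) := by
        rw [← mul_assoc, ← mul_pow]; norm_num
    _ ≤ 3 ^ m * (4 / 3) ^ n := by norm_num at hchernoff ⊢; gcongr

theorem two_pow_mul_sum_range_choose_pow_twelve_le {n m : ℕ} (h : 4 * m ≤ n) :
    ((2 : ℝ) ^ n * ∑ j ∈ range (m + 1), (n.choose j : ℝ)) ^ 12 ≤ 2 ^ (22 * n) :=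
  calc ((2 : ℝ) ^ n * ∑ j ∈ range (m + 1), (n.choose j : ℝ)) ^ 12
      ≤ ((2 : ℝ) ^ n * (3 ^ m * (4 / 3) ^ n)) ^ 12 := by
        gcongr; exact sum_range_choose_le_three_pow_mul n m
    _ = ((2 * (4 / 3)) ^ 12) ^ n * 3 ^ (12 * m) := by
        rw [← pow_mul, mul_comm 12 n, pow_mul, mul_pow 2 (4 / 3) n, pow_mul' 3]; ring
    _ ≤ ((2 * (4 / 3)) ^ 12) ^ n * 3 ^ (3 * n) := by
        gcongr _ * ?_; exact pow_le_pow_right₀ (by norm_num) (by omega)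
    _ = ((2 * (4 / 3)) ^ 12 * 3 ^ 3) ^ n := by rw [pow_mul (3 : ℝ) 3 n, ← mul_pow]
    _ ≤ (2 ^ 22) ^ n := by gcongr; norm_num
    _ = 2 ^ (22 * n) := (pow_mul _ _ _).symm

theorem binomial_tail_sum_le_even_general
    (κ : ℕ) :
    (2 : ℝ) ^ (κ / 2) * ∑ j ∈ Finset.range (κ / 8 + 1), ((κ / 2).choose j : ℝ)
      ≤ (2 : ℝ) ^ ((11 * (κ : ℝ)) / 12) := by
  have hpow := two_pow_mul_sum_range_choose_pow_twelve_le (n := κ / 2) (m := κ / 8) (by omega)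
  have hrhs : (2 : ℝ) ^ ((11 * (κ : ℝ)) / 12) = ((2 : ℝ) ^ (11 * κ)) ^ (12 : ℝ)⁻¹ := by
    rw [← Real.rpow_natCast, ← Real.rpow_mul (by norm_num)]
    push_cast
    ring_nf
  rw [hrhs, Real.le_rpow_inv_iff_of_pos (by positivity) (by positivity) (by norm_num),
    Real.rpow_ofNat]
  exact hpow.trans (pow_le_pow_right₀ (by norm_num) (by omega))

/-- for even `κ ≥ 1`, `2^{κ/2} ∑_{0 ≤ j ≤ κ/8} C(κ/2, j) ≤ 2^{11κ/12}`. -/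
theorem binomial_tail_sum_le_even
    (κ : ℕ) (hκ : 0 < κ) (hκe : Even κ) :
    (2 : ℝ) ^ (κ / 2) * ∑ j ∈ Finset.range (κ / 8 + 1), ((κ / 2).choose j : ℝ)
      ≤ (2 : ℝ) ^ ((11 * (κ : ℝ)) / 12) :=
  binomial_tail_sum_le_even_general κ
end

section
/- Let ϑ be an irrational real number and γ ≥ 2 a real number such that there exists κ > 0 with |ϑ − r/q| ≥ κ/q^γ for all integers r and q ≥ 1 with gcd(r, q) = 1. Then there exist constants C > 0 and n₀ such that for every integer n ≥ n₀ and every subinterval I of [0, 1], the number of integers ν with 1 ≤ ν ≤ n and fract(νϑ) ∈ I differs from n·|I| by at most C n^{1 − 1/γ}, where fract denotes the fractional part and |I| the length of I. -/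
/-!
By Dirichlet's theorem `ϑ` has an approximation `p / q` with `q ≤ ⌈n ^ (1 - 1/γ)⌉` and
`q ^ 2 * |ϑ - p / q| ≤ 1`. On a block of `q` consecutive indices, `ν * ϑ` stays within `1 / q` of
the shifted grid `ν * p / q + α`, which, `p` and `q` being coprime, meets every residue class
mod `1 / q` exactly once; so every block contributes a bounded error. Summing over the blocks
gives an error `O(n / q + q)`, and the irrationality exponent bounds `q` from below by a constant
times `n ^ (1/γ)`, which balances the two terms.
-/

open Finset

lemma injOn_mul_add_emod {p c : ℤ} {q : ℕ} (hpq : IsCoprime p q) (a : ℕ) :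
    Set.InjOn (fun ν : ℕ ↦ ((ν : ℤ) * p + c) % q) (Ioc a (a + q) : Set ℕ) := by
  intro ν₁ h₁ ν₂ h₂ h
  simp only [coe_Ioc, Set.mem_Ioc] at h₁ h₂
  have hdvd : (q : ℤ) ∣ ((ν₁ : ℤ) - ν₂) * p := by
    simpa only [sub_mul, add_sub_add_right_eq_sub] using Int.ModEq.dvd h.symm
  have := Int.eq_zero_of_abs_lt_dvd (hpq.symm.dvd_of_dvd_mul_right hdvd) (by rw [abs_lt]; omega)
  omega

lemma card_filter_mul_add_emod_lt {p c : ℤ} {q : ℕ} (hpq : IsCoprime p q) (a : ℕ) {m : ℤ}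
    (hm : 0 ≤ m) (hmq : m ≤ q) :
    ((#((Ioc a (a + q)).filter fun ν : ℕ ↦ ((ν : ℤ) * p + c) % q < m) : ℕ) : ℤ) = m := by
  rcases Nat.eq_zero_or_pos q with rfl | hq
  · obtain rfl : m = 0 := by omega
    simp
  -- The residue map injects the filter into `[0, m)` and its complement into `[m, q)`; since
  -- together they fill a block of size `q`, both bounds are equalities.
  have hinj := injOn_mul_add_emod (c := c) hpq a
  have hlt : #((Ioc a (a + q)).filter fun ν : ℕ ↦ ((ν : ℤ) * p + c) % q < m) ≤ #(Ico 0 m) :=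
    card_le_card_of_injOn _ (fun ν hν ↦ by
      simp only [coe_filter, coe_Ico, Set.mem_Ico] at hν ⊢
      exact ⟨Int.emod_nonneg _ (by omega), hν.2⟩) (hinj.mono (coe_subset.2 (filter_subset _ _)))
  have hge : #((Ioc a (a + q)).filter fun ν : ℕ ↦ ¬ ((ν : ℤ) * p + c) % q < m) ≤ #(Ico m q) :=
    card_le_card_of_injOn _ (fun ν hν ↦ by
      simp only [coe_filter, coe_Ico, Set.mem_Ico] at hν ⊢
      exact ⟨not_lt.mp hν.2, Int.emod_lt_of_pos _ (by omega)⟩)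
      (hinj.mono (coe_subset.2 (filter_subset _ _)))
  have htotal := card_filter_add_card_filter_not (s := Ioc a (a + q))
    (fun ν : ℕ ↦ ((ν : ℤ) * p + c) % q < m)
  simp only [Int.card_Ico, Nat.card_Ioc] at hlt hge htotal
  omega

lemma exists_sub_mul_mem_Ico_iff {q A B t : ℤ} (hq : 0 < q) (hAB : B ≤ A + q) :
    (∃ k : ℤ, t - q * k ∈ Set.Ico A B) ↔ (t - A) % q < B - A := by
  constructor
  · rintro ⟨k, hk₁, hk₂⟩
    rw [show t - A = t - q * k - A + q * k by ring, Int.add_mul_emod_self_left,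
      Int.emod_eq_of_lt (by omega) (by omega)]
    omega
  · intro h
    have := Int.emod_def (t - A) q
    have := Int.emod_nonneg (t - A) hq.ne'
    exact ⟨(t - A) / q, by omega, by omega⟩

open scoped Classical in
lemma abs_card_filter_exists_sub_mem_Ico_sub_lt_one {p : ℤ} {q : ℕ} (hq : 0 < q)
    (hpq : IsCoprime p q) (a : ℕ) (α : ℝ) {u v : ℝ} (huv : u ≤ v) (hvu : v ≤ u + 1) :
    |(#((Ioc a (a + q)).filter fun ν : ℕ ↦ ∃ k : ℤ, ν * p / q + α - k ∈ Set.Ico u v) : ℝ)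
      - q * (v - u)| < 1 := by
  have hq' : (0 : ℝ) < q := by exact_mod_cast hq
  set A := ⌈q * (u - α)⌉
  set B := ⌈q * (v - α)⌉
  have hAB : A ≤ B := Int.ceil_mono (by gcongr)
  have hBA : B ≤ A + q := by
    rw [← Int.ceil_add_natCast]; exact Int.ceil_mono (by nlinarith)
  have hiff (ν : ℕ) : (∃ k : ℤ, (ν : ℝ) * p / q + α - k ∈ Set.Ico u v) ↔
      ((ν : ℤ) * p + -A) % q < B - A := by
    rw [← sub_eq_add_neg, ← exists_sub_mul_mem_Ico_iff (by exact_mod_cast hq) hBA]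
    refine exists_congr fun k ↦ ?_
    have hsplit : (ν : ℝ) * p / q + α - k = ((ν : ℝ) * p - q * k) / q + α := by
      field_simp; ring
    simp only [Set.mem_Ico, A, B, Int.ceil_le, Int.lt_ceil, hsplit, ← sub_le_iff_le_add,
      ← lt_sub_iff_add_lt, le_div_iff₀' hq', div_lt_iff₀' hq']
    push_cast
    rfl
  have hcard : (#((Ioc a (a + q)).filter fun ν : ℕ ↦
      ∃ k : ℤ, ν * p / q + α - k ∈ Set.Ico u v) : ℝ) = B - A := by
    rw [filter_congr fun ν _ ↦ hiff ν]
    exact_mod_cast card_filter_mul_add_emod_lt hpq a (by omega) (by omega)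
  have := Int.le_ceil (q * (u - α))
  have := Int.le_ceil (q * (v - α))
  have := Int.ceil_lt_add_one (q * (u - α))
  have := Int.ceil_lt_add_one (q * (v - α))
  rw [hcard, abs_sub_lt_iff]
  constructor <;> linarith

lemma fract_mem_Ioo_of_sub_mem_Ico {s t x y ε : ℝ} {k : ℤ} (hx : 0 ≤ x) (hy : y ≤ 1)
    (hε : 0 < ε) (hts : |t - s| ≤ ε) (hk : s - k ∈ Set.Ico (x + 2 * ε) (y - 2 * ε)) :
    Int.fract t ∈ Set.Ioo x y := by
  rw [abs_le] at hts
  obtain ⟨hk₁, hk₂⟩ := hk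
  have : Int.fract t = t - k := Int.fract_eq_iff.2 ⟨by linarith, by linarith, k, by ring⟩
  exact ⟨by linarith, by linarith⟩

lemma exists_sub_mem_Ico_of_fract_mem_Icc {s t x y ε : ℝ} (hε : 0 < ε) (hts : |t - s| ≤ ε)
    (ht : Int.fract t ∈ Set.Icc x y) : ∃ k : ℤ, s - k ∈ Set.Ico (x - ε) (y + 2 * ε) := by
  rw [abs_le] at hts
  obtain ⟨ht₁, ht₂⟩ := ht
  rw [Int.fract] at ht₁ ht₂
  exact ⟨⌊t⌋, by linarith, by linarith⟩

open scoped Classical in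
lemma abs_card_filter_fract_mem_sub_le {p : ℤ} {q : ℕ} (hq : 0 < q) (hpq : IsCoprime p q)
    (a : ℕ) (t : ℕ → ℝ) (α : ℝ) {ε : ℝ} (hε : 0 < ε)
    (ht : ∀ ν ∈ Ioc a (a + q), |t ν - (ν * p / q + α)| ≤ ε)
    {x y : ℝ} (hx : 0 ≤ x) (hxy : x ≤ y) (hy : y ≤ 1)
    {I : Set ℝ} (hI₁ : Set.Ioo x y ⊆ I) (hI₂ : I ⊆ Set.Icc x y) :
    |(#((Ioc a (a + q)).filter fun ν ↦ Int.fract (t ν) ∈ I) : ℝ) - q * (y - x)|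
      ≤ 4 * q * ε + 1 := by
  have hq' : (0 : ℝ) < q := by exact_mod_cast hq
  set S := (Ioc a (a + q)).filter fun ν ↦ Int.fract (t ν) ∈ I
  have hlower : q * (y - x) - 4 * q * ε - 1 ≤ #S := by
    rcases lt_or_ge (y - 2 * ε) (x + 2 * ε) with h | h
    · nlinarith [(#S).cast_nonneg (α := ℝ)]
    have hgrid := abs_card_filter_exists_sub_mem_Ico_sub_lt_one hq hpq a α h (by linarith)
    have hsub : #((Ioc a (a + q)).filter fun ν : ℕ ↦
        ∃ k : ℤ, ν * p / q + α - k ∈ Set.Ico (x + 2 * ε) (y - 2 * ε))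
        ≤ #S := card_le_card fun ν hν ↦ by
        rw [mem_filter] at hν ⊢
        obtain ⟨hν, k, hk⟩ := hν
        exact ⟨hν, hI₁ (fract_mem_Ioo_of_sub_mem_Ico hx hy hε (ht ν hν) hk)⟩
    rw [abs_sub_lt_iff] at hgrid
    have : (_ : ℝ) ≤ _ := Nat.cast_le.2 hsub
    linarith
  have hupper : (#S : ℝ) ≤ q * (y - x) + 3 * q * ε + 1 := by
    rcases lt_or_ge 1 (y + 2 * ε - (x - ε)) with h | h
    · have hS : #S ≤ q := (card_filter_le _ _).trans (by simp)
      have : (#S : ℝ) ≤ q := by exact_mod_cast hS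
      nlinarith
    have hgrid := abs_card_filter_exists_sub_mem_Ico_sub_lt_one hq hpq a α
      (by linarith : x - ε ≤ y + 2 * ε) (by linarith)
    have hsub : #S
        ≤ #((Ioc a (a + q)).filter fun ν : ℕ ↦
          ∃ k : ℤ, ν * p / q + α - k ∈ Set.Ico (x - ε) (y + 2 * ε)) := card_le_card fun ν hν ↦ by
        rw [mem_filter] at hν ⊢
        exact ⟨hν.1, exists_sub_mem_Ico_of_fract_mem_Icc hε (ht ν hν.1) (hI₂ hν.2)⟩
    rw [abs_sub_lt_iff] at hgrid
    have : (_ : ℝ) ≤ _ := Nat.cast_le.2 hsub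
    linarith
  rw [abs_le]
  constructor <;> nlinarith

open scoped Classical in
lemma abs_card_filter_fract_nat_mul_mem_sub_le {ϑ : ℝ} {r : ℚ} (hr₀ : 0 < |ϑ - r|)
    (hr₁ : (r.den : ℝ) ^ 2 * |ϑ - r| ≤ 1) (a : ℕ) {x y : ℝ} (hx : 0 ≤ x) (hxy : x ≤ y)
    (hy : y ≤ 1) {I : Set ℝ} (hI₁ : Set.Ioo x y ⊆ I) (hI₂ : I ⊆ Set.Icc x y) :
    |(#((Ioc a (a + r.den)).filter fun ν : ℕ ↦ Int.fract (ν * ϑ) ∈ I) : ℝ) - r.den * (y - x)|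
      ≤ 5 := by
  have hq : (0 : ℝ) < r.den := by positivity
  have hperturb (ν : ℕ) (hν : ν ∈ Ioc a (a + r.den)) :
      |ν * ϑ - (ν * r.num / r.den + a * (ϑ - r))| ≤ r.den * |ϑ - r| := by
    rw [mem_Ioc] at hν
    have hνa : (a : ℝ) < ν := by exact_mod_cast hν.1
    have hνq : (ν : ℝ) ≤ a + r.den := by exact_mod_cast hν.2
    rw [show ν * ϑ - (ν * r.num / r.den + a * (ϑ - r)) = (ν - a) * (ϑ - r) by
      rw [Rat.cast_def]; ring, abs_mul, abs_of_pos (sub_pos.2 hνa)]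
    gcongr
    linarith
  calc _ ≤ 4 * r.den * (r.den * |ϑ - r|) + 1 :=
        abs_card_filter_fract_mem_sub_le r.den_pos (Rat.isCoprime_num_den r) a _ _
          (by positivity) hperturb hx hxy hy hI₁ hI₂
    _ ≤ 5 := by nlinarith

lemma abs_card_filter_Ioc_sub_le (P : ℕ → Prop) [DecidablePred P] {q : ℕ} (hq : 0 < q)
    {L D : ℝ} (hL₀ : 0 ≤ L) (hL₁ : L ≤ 1)
    (hblock : ∀ a, |(#((Ioc a (a + q)).filter P) : ℝ) - q * L| ≤ D) (n : ℕ) :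
    |(#((Ioc 0 n).filter P) : ℝ) - n * L| ≤ D * (n / q) + q := by
  induction n using Nat.strong_induction_on with
  | _ n ih =>
  rcases lt_or_ge n q with hn | hn
  · have hc : (#((Ioc 0 n).filter P) : ℝ) ≤ n := by
      exact_mod_cast (card_filter_le _ _).trans (Nat.card_Ioc 0 n).le
    have hD : 0 ≤ D * (n / q) := mul_nonneg ((abs_nonneg _).trans (hblock 0)) (by positivity)
    have hnq : (n : ℝ) ≤ q := by exact_mod_cast hn.le
    rw [abs_le]
    constructor <;> nlinarith [(#((Ioc 0 n).filter P)).cast_nonneg (α := ℝ)]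
  obtain ⟨m, rfl⟩ := Nat.exists_eq_add_of_le' hn
  rw [← Ioc_union_Ioc_eq_Ioc (Nat.zero_le m) (Nat.le_add_right m q), filter_union,
    card_union_of_disjoint (disjoint_filter_filter (Ioc_disjoint_Ioc_of_le le_rfl))]
  push_cast
  calc _ = |(#((Ioc 0 m).filter P) - m * L) + (#((Ioc m (m + q)).filter P) - q * L)| := by
        ring_nf
    _ ≤ D * (m / q) + q + D := (abs_add_le _ _).trans (add_le_add (ih m (by omega)) (hblock m))
    _ = D * ((m + q) / q) + q := by field_simp; ring

lemma exists_rat_den_le_of_irrationality_exponent {ϑ γ κ : ℝ} (hκ : 0 < κ)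
    (hirr : ∀ r : ℤ, ∀ q : ℕ, 1 ≤ q → Int.gcd r (q : ℤ) = 1 →
      κ / (q : ℝ) ^ γ ≤ |ϑ - (r : ℝ) / (q : ℝ)|) {N : ℕ} (hN : 0 < N) :
    ∃ r : ℚ, r.den ≤ N ∧ 0 < |ϑ - r| ∧ (r.den : ℝ) ^ 2 * |ϑ - r| ≤ 1 ∧
      κ * (N + 1) ≤ (r.den : ℝ) ^ (γ - 1) := by
  obtain ⟨r, hr, hden⟩ := Real.exists_rat_abs_sub_le_and_den_le ϑ hN
  have hq : (0 : ℝ) < r.den := by positivity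
  have hN' : (r.den : ℝ) ≤ N := by exact_mod_cast hden
  have hlow : κ / (r.den : ℝ) ^ γ ≤ |ϑ - r| := by
    rw [Rat.cast_def]
    exact hirr r.num r.den r.pos (by simpa [Int.gcd] using r.reduced)
  refine ⟨r, hden, (div_pos hκ (by positivity)).trans_le hlow, ?_, ?_⟩
  · calc (r.den : ℝ) ^ 2 * |ϑ - r| ≤ (r.den : ℝ) ^ 2 * (1 / ((N + 1) * r.den)) := by gcongr
      _ = (r.den : ℝ) / (N + 1) := by field_simp
      _ ≤ 1 := by rw [div_le_one (by positivity)]; linarith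
  · have h := hlow.trans hr
    rw [div_le_div_iff₀ (by positivity) (by positivity)] at h
    rw [Real.rpow_sub_one hq.ne', le_div_iff₀ hq]
    linarith

lemma div_le_rpow_neg_inv_mul_rpow {κ γ q n : ℝ} (hκ : 0 < κ) (hγ : 1 < γ) (hq : 0 < q)
    (hn : 0 ≤ n) (h : κ * n ^ (1 - 1 / γ) ≤ q ^ (γ - 1)) :
    n / q ≤ κ ^ (-(γ - 1)⁻¹) * n ^ (1 - 1 / γ) := by
  have hγ₀ : γ - 1 ≠ 0 := by linarith
  have hqκ : κ ^ (γ - 1)⁻¹ * n ^ (1 / γ) ≤ q :=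
    calc κ ^ (γ - 1)⁻¹ * n ^ (1 / γ) = (κ * n ^ (1 - 1 / γ)) ^ (γ - 1)⁻¹ := by
          rw [Real.mul_rpow hκ.le (by positivity), ← Real.rpow_mul hn]
          congr 2
          field_simp
      _ ≤ (q ^ (γ - 1)) ^ (γ - 1)⁻¹ := by gcongr
      _ = q := by rw [← Real.rpow_mul hq.le, mul_inv_cancel₀ hγ₀, Real.rpow_one]
  rw [div_le_iff₀ hq]
  calc n = κ ^ (-(γ - 1)⁻¹) * n ^ (1 - 1 / γ) * (κ ^ (γ - 1)⁻¹ * n ^ (1 / γ)) := by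
        rw [mul_mul_mul_comm, ← Real.rpow_add hκ, neg_add_cancel, Real.rpow_zero, one_mul,
          ← Real.rpow_add' hn (by norm_num), sub_add_cancel, Real.rpow_one]
    _ ≤ κ ^ (-(γ - 1)⁻¹) * n ^ (1 - 1 / γ) * q := by gcongr

theorem discrepancy_bound_of_irrationality_exponent_general
    (ϑ : ℝ) (γ : ℝ) (hγ : 2 ≤ γ)
    (hirr : ∃ κ > (0 : ℝ), ∀ r : ℤ, ∀ q : ℕ, 1 ≤ q → Int.gcd r (q : ℤ) = 1 →
      κ / (q : ℝ) ^ γ ≤ |ϑ - (r : ℝ) / (q : ℝ)|) :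
    ∃ C > (0 : ℝ), ∃ n₀ : ℕ, ∀ n : ℕ, n₀ ≤ n →
      ∀ x y : ℝ, 0 ≤ x → x ≤ y → y ≤ 1 →
        ∀ I : Set ℝ, Set.Ioo x y ⊆ I → I ⊆ Set.Icc x y →
          |(({ν : ℕ | 1 ≤ ν ∧ ν ≤ n ∧ Int.fract ((ν : ℝ) * ϑ) ∈ I}.ncard : ℝ))
              - (n : ℝ) * (y - x)|
            ≤ C * (n : ℝ) ^ (1 - 1 / γ) := by
  classical
  obtain ⟨κ, hκ, hirr⟩ := hirr
  refine ⟨5 * κ ^ (-(γ - 1)⁻¹) + 2, by positivity, 1, fun n hn x y hx hxy hy I hI₁ hI₂ ↦ ?_⟩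
  have hns : 1 ≤ (n : ℝ) ^ (1 - 1 / γ) :=
    Real.one_le_rpow (by exact_mod_cast hn) (by rw [sub_nonneg, div_le_one] <;> linarith)
  obtain ⟨r, hden, hr₀, hr₁, hrγ⟩ := exists_rat_den_le_of_irrationality_exponent hκ hirr
    (N := ⌈(n : ℝ) ^ (1 - 1 / γ)⌉₊) (by positivity)
  have hceil := Nat.ceil_lt_add_one (zero_le_one.trans hns)
  have hq_le : (r.den : ℝ) ≤ 2 * (n : ℝ) ^ (1 - 1 / γ) := by
    have : (r.den : ℝ) ≤ ⌈(n : ℝ) ^ (1 - 1 / γ)⌉₊ := by exact_mod_cast hden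
    linarith
  have hnq : (n : ℝ) / r.den ≤ κ ^ (-(γ - 1)⁻¹) * (n : ℝ) ^ (1 - 1 / γ) :=
    div_le_rpow_neg_inv_mul_rpow hκ (by linarith) (by positivity) (by positivity)
      (by nlinarith [Nat.le_ceil ((n : ℝ) ^ (1 - 1 / γ))])
  have hset : {ν : ℕ | 1 ≤ ν ∧ ν ≤ n ∧ Int.fract ((ν : ℝ) * ϑ) ∈ I}
      = ((Ioc 0 n).filter fun ν : ℕ ↦ Int.fract (ν * ϑ) ∈ I : Set ℕ) := by
    ext ν
    simp [Nat.one_le_iff_ne_zero, Nat.pos_iff_ne_zero, and_assoc]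
  rw [hset, Set.ncard_coe_finset]
  calc _ ≤ 5 * ((n : ℝ) / r.den) + r.den := abs_card_filter_Ioc_sub_le _ r.den_pos (by linarith)
          (by linarith) (fun a ↦ abs_card_filter_fract_nat_mul_mem_sub_le hr₀ hr₁ a hx hxy hy
            hI₁ hI₂) n
    _ ≤ 5 * (κ ^ (-(γ - 1)⁻¹) * (n : ℝ) ^ (1 - 1 / γ)) + 2 * (n : ℝ) ^ (1 - 1 / γ) := by
          gcongr
    _ = _ := by ring

/-- discrepancy bound `O(n^{1-1/γ})` for `(⟨νϑ⟩)_ν` when `ϑ` has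
irrationality exponent at most `γ`. -/
theorem discrepancy_bound_of_irrationality_exponent
    (ϑ : ℝ) (hϑ : Irrational ϑ) (γ : ℝ) (hγ : 2 ≤ γ)
    (hirr : ∃ κ > (0 : ℝ), ∀ r : ℤ, ∀ q : ℕ, 1 ≤ q → Int.gcd r (q : ℤ) = 1 →
      κ / (q : ℝ) ^ γ ≤ |ϑ - (r : ℝ) / (q : ℝ)|) :
    ∃ C > (0 : ℝ), ∃ n₀ : ℕ, ∀ n : ℕ, n₀ ≤ n →
      ∀ x y : ℝ, 0 ≤ x → x ≤ y → y ≤ 1 →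
        ∀ I : Set ℝ, Set.Ioo x y ⊆ I → I ⊆ Set.Icc x y →
          |(({ν : ℕ | 1 ≤ ν ∧ ν ≤ n ∧ Int.fract ((ν : ℝ) * ϑ) ∈ I}.ncard : ℝ))
              - (n : ℝ) * (y - x)|
            ≤ C * (n : ℝ) ^ (1 - 1 / γ) :=
  discrepancy_bound_of_irrationality_exponent_general ϑ γ hγ hirr
end

section
/- Let ϑ be an irrational real number and γ ≥ 2 a real number such that there exists κ > 0 with |ϑ − r/q| ≥ κ/q^γ for all integers r and q ≥ 1 with gcd(r, q) = 1. Then there exist c > 0 and n₀ such that for every integer n ≥ n₀ there exist integers r and q with gcd(r, q) = 1, c·n^{1/γ} ≤ q ≤ n^{1 − 1/γ}, and |ϑ − r/q| ≤ n^{1/γ − 1}/q. -/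
/-- Dirichlet approximation combined with a finite irrationality exponent:
there are coprime `r, q` with `c n^{1/γ} ≤ q ≤ n^{1-1/γ}` and `|ϑ - r/q| ≤ n^{1/γ-1}/q`. -/
theorem exists_good_rational_approx_of_irrationality_exponent
    (ϑ : ℝ) (hϑ : Irrational ϑ) (γ : ℝ) (hγ : 2 ≤ γ)
    (hirr : ∃ κ > (0 : ℝ), ∀ r : ℤ, ∀ q : ℕ, 1 ≤ q → Int.gcd r (q : ℤ) = 1 →
      κ / (q : ℝ) ^ γ ≤ |ϑ - (r : ℝ) / (q : ℝ)|) :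
    ∃ c > (0 : ℝ), ∃ n₀ : ℕ, ∀ n : ℕ, n₀ ≤ n →
      ∃ r : ℤ, ∃ q : ℕ, 1 ≤ q ∧ Int.gcd r (q : ℤ) = 1 ∧
        c * (n : ℝ) ^ (1 / γ) ≤ (q : ℝ) ∧ (q : ℝ) ≤ (n : ℝ) ^ (1 - 1 / γ) ∧
        |ϑ - (r : ℝ) / (q : ℝ)| ≤ (n : ℝ) ^ (1 / γ - 1) / (q : ℝ) := by
  obtain ⟨κ, hκ, hbound⟩ := hirr
  have hγ0 : (0:ℝ) < γ := by linarith
  have hγ1 : (0:ℝ) < γ - 1 := by linarith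
  refine ⟨κ ^ (1/(γ-1)), Real.rpow_pos_of_pos hκ _, 1, fun n hn => ?_⟩
  have hn0 : (0:ℝ) < n := by exact_mod_cast hn
  have hn1 : (1:ℝ) ≤ n := by exact_mod_cast hn
  set A : ℝ := (n:ℝ) ^ (1 - 1/γ) with hA
  have hApos : 0 < A := Real.rpow_pos_of_pos hn0 _
  have hexp : (0:ℝ) ≤ 1 - 1/γ := by
    have : 1/γ ≤ 1 := by rw [div_le_one hγ0]; linarith
    linarith
  have hA1 : 1 ≤ A := Real.one_le_rpow hn1 hexp
  set N : ℕ := ⌊A⌋₊ with hNdef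
  have hN1 : 1 ≤ N := Nat.le_floor (by exact_mod_cast hA1)
  obtain ⟨x, hx1, hx2⟩ := Real.exists_rat_abs_sub_le_and_den_le ϑ (show 0 < N from hN1)
  set q := x.den with hqdef
  set r := x.num with hrdef
  have hq1 : 1 ≤ q := x.pos
  have hqR : (0:ℝ) < q := by exact_mod_cast hq1
  have hgcd : Int.gcd r (q:ℤ) = 1 := x.reduced
  have hcast : (x:ℝ) = (r:ℝ)/(q:ℝ) := by rw [Rat.cast_def]
  have hqA : (q:ℝ) ≤ A := le_trans (Nat.cast_le.mpr hx2) (Nat.floor_le hApos.le)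
  have hNA : A ≤ (N:ℝ) + 1 := (Nat.lt_floor_add_one A).le
  have hinv : (n:ℝ) ^ (1/γ - 1) = A⁻¹ := by
    rw [hA, ← Real.rpow_neg hn0.le]
    ring_nf
  have happrox : |ϑ - (r:ℝ)/(q:ℝ)| ≤ (n:ℝ)^(1/γ-1) / q := by
    rw [← hcast, hinv]
    calc |ϑ - (x:ℝ)| ≤ 1 / (((N:ℝ)+1)*q) := hx1
      _ ≤ 1 / (A*q) := by
          apply one_div_le_one_div_of_le (by positivity)
          exact mul_le_mul_of_nonneg_right hNA hqR.le
      _ = A⁻¹ / q := by field_simp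
  refine ⟨r, q, hq1, hgcd, ?_, hqA, happrox⟩
  -- lower bound on q
  have h1 : κ / (q:ℝ)^γ ≤ A⁻¹ / q := by
    have := hbound r q hq1 hgcd
    rw [hinv] at happrox
    exact this.trans happrox
  have h2 : κ * A ≤ (q:ℝ)^(γ-1) := by
    have hqγ : (0:ℝ) < (q:ℝ)^γ := Real.rpow_pos_of_pos hqR γ
    rw [div_le_div_iff₀ hqγ hqR] at h1
    have h3 : κ * A * q ≤ (q:ℝ)^γ := by
      calc κ * A * q = κ * q * A := by ring
        _ ≤ A⁻¹ * (q:ℝ)^γ * A := mul_le_mul_of_nonneg_right h1 hApos.le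
        _ = (q:ℝ)^γ := by field_simp
    have : (q:ℝ)^(γ-1) = (q:ℝ)^γ / q := by
      rw [Real.rpow_sub hqR, Real.rpow_one]
    rw [this, le_div_iff₀ hqR]
    exact h3
  have h4 : (κ * A) ^ (1/(γ-1)) ≤ (q:ℝ) := by
    calc (κ * A) ^ (1/(γ-1)) ≤ ((q:ℝ)^(γ-1)) ^ (1/(γ-1)) :=
          Real.rpow_le_rpow (by positivity) h2 (by positivity)
      _ = (q:ℝ) := by
          rw [← Real.rpow_mul hqR.le, mul_one_div, div_self hγ1.ne', Real.rpow_one]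
  calc κ ^ (1/(γ-1)) * (n:ℝ) ^ (1/γ) = (κ * A) ^ (1/(γ-1)) := by
        rw [Real.mul_rpow hκ.le (Real.rpow_pos_of_pos hn0 _).le,
          ← Real.rpow_mul hn0.le]
        congr 2
        field_simp
    _ ≤ (q:ℝ) := h4
end

section
/- Let a ≥ 2 be an integer. The function f(v) := a e^{av}/(e^{av} − 1) − e^v/(e^v − 1), defined for v > 0, is strictly increasing on (0, ∞), tends to (a−1)/2 as v → 0⁺, and tends to a − 1 as v → ∞; in particular, for every real λ with 1 < λ < 2 there exists a unique v > 0 with f(v) = λ(a−1)/2. -/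
/-!
With `g x = exp x / (exp x - 1)` we have `f v = a * g (a * v) - g v`. Since
`g' x = -1 / (4 sinh² (x / 2))`, the inequality `f' v > 0` is `a sinh (v / 2) < sinh (a v / 2)`,
which holds for every real `a > 1` because `sinh (a t) - a sinh t` vanishes at `0` and has
derivative `a (cosh (a t) - cosh t) > 0`. Near `0` the poles cancel in
`f v = a (g (a v) - 1 / (a v)) - (g v - 1 / v)`, and `g x - 1 / x → 1 / 2` by the Taylor expansion
of `exp` to second order; at infinity `g → 1`. The value `λ (a - 1) / 2` lies strictly between
the two limits, so the intermediate value theorem and strict monotonicity give a unique solution.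
-/

open Real Filter Set Topology
open scoped Nat

theorem mul_sinh_lt_sinh_mul {a t : ℝ} (ha : 1 < a) (ht : 0 < t) : a * sinh t < sinh (a * t) := by
  have hmono : StrictMonoOn (fun s => sinh (a * s) - a * sinh s) (Ici 0) := by
    refine strictMonoOn_of_hasDerivWithinAt_pos (convex_Ici 0) (by fun_prop)
      (f' := fun s => a * (cosh (a * s) - cosh s)) (fun s _ => ?_) (fun s hs => ?_)
    · refine (((hasDerivAt_id s).const_mul a).sinh.sub
        ((hasDerivAt_sinh s).const_mul a)).hasDerivWithinAt.congr_deriv ?_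
      simp only [id_eq, mul_one]
      ring
    · rw [interior_Ici, mem_Ioi] at hs
      have hcosh : cosh s < cosh (a * s) := by
        rw [cosh_lt_cosh, abs_of_pos hs, abs_of_pos (mul_pos (by linarith) hs)]
        nlinarith
      exact mul_pos (by linarith) (sub_pos.2 hcosh)
  simpa using hmono (self_mem_Ici) ht.le ht

theorem four_mul_sinh_half_sq (x : ℝ) : 4 * sinh (x / 2) ^ 2 = (exp x - 1) ^ 2 / exp x := by
  have h := cosh_two_mul (x / 2)
  rw [mul_div_cancel₀ x two_ne_zero, cosh_sq, cosh_eq, exp_neg] at h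
  field_simp at h ⊢
  linarith

theorem exp_sub_one_ne_zero {x : ℝ} (hx : x ≠ 0) : exp x - 1 ≠ 0 :=
  sub_ne_zero.2 fun h => hx ((exp_eq_one_iff x).1 h)

theorem tendsto_exp_sub_one_div : Tendsto (fun x => (exp x - 1) / x) (𝓝[≠] 0) (𝓝 1) := by
  simpa [div_eq_inv_mul] using (hasDerivAt_exp 0).tendsto_slope_zero

theorem tendsto_exp_sub_one_sub_div_sq :
    Tendsto (fun x => (exp x - 1 - x) / x ^ 2) (𝓝[≠] 0) (𝓝 (1 / 2)) := by
  have h := ((exp_sub_sum_range_succ_isLittleO_pow 2).tendsto_div_nhds_zero.mono_left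
    (nhdsWithin_le_nhds (s := {0}ᶜ))).const_add (1 / 2)
  rw [add_zero] at h
  refine h.congr' (eventually_nhdsWithin_of_forall fun x (hx : x ≠ 0) => ?_)
  have htaylor : ∑ i ∈ Finset.range (2 + 1), x ^ i / (i ! : ℝ) = 1 + x + x ^ 2 / 2 := by
    norm_num [Finset.sum_range_succ]
  rw [htaylor]
  field_simp
  ring

noncomputable def expDivExpSubOne (x : ℝ) : ℝ := exp x / (exp x - 1)

-- Also at `x = 0`, where both sides are the junk value `0`.
theorem expDivExpSubOne_eq_inv (x : ℝ) : expDivExpSubOne x = (1 - exp (-x))⁻¹ := by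
  rw [expDivExpSubOne, exp_neg, ← inv_div, sub_div, div_self (exp_ne_zero x), one_div]

theorem hasDerivAt_expDivExpSubOne {x : ℝ} (hx : x ≠ 0) :
    HasDerivAt expDivExpSubOne (-(4 * sinh (x / 2) ^ 2)⁻¹) x := by
  rw [funext expDivExpSubOne_eq_inv]
  refine (((hasDerivAt_neg x).exp.const_sub 1).inv ?_).congr_deriv ?_
  · rw [sub_ne_zero, ne_comm, Ne, exp_eq_one_iff, neg_eq_zero]
    exact hx
  have := exp_sub_one_ne_zero hx
  rw [four_mul_sinh_half_sq, exp_neg]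
  field_simp

theorem tendsto_expDivExpSubOne_atTop : Tendsto expDivExpSubOne atTop (𝓝 1) := by
  rw [funext expDivExpSubOne_eq_inv]
  simpa using (tendsto_exp_neg_atTop_nhds_zero.const_sub 1).inv₀ (by norm_num)

theorem tendsto_expDivExpSubOne_sub_inv :
    Tendsto (fun x => expDivExpSubOne x - x⁻¹) (𝓝[≠] 0) (𝓝 (1 / 2)) := by
  have h := (tendsto_exp_sub_one_sub_div_sq.div tendsto_exp_sub_one_div one_ne_zero).const_sub 1
  rw [div_one, show (1 : ℝ) - 1 / 2 = 1 / 2 by norm_num] at h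
  refine h.congr' (eventually_nhdsWithin_of_forall fun x (hx : x ≠ 0) => ?_)
  have := exp_sub_one_ne_zero hx
  simp only [Pi.div_apply, expDivExpSubOne]
  field_simp
  ring

noncomputable def saddlePointFun (a v : ℝ) : ℝ :=
  a * expDivExpSubOne (a * v) - expDivExpSubOne v

section

variable {a : ℝ}

theorem hasDerivAt_saddlePointFun (ha : a ≠ 0) {v : ℝ} (hv : v ≠ 0) :
    HasDerivAt (saddlePointFun a)
      ((4 * sinh (v / 2) ^ 2)⁻¹ - a ^ 2 * (4 * sinh (a * (v / 2)) ^ 2)⁻¹) v := by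
  have h := (((hasDerivAt_expDivExpSubOne (mul_ne_zero ha hv)).comp v
    ((hasDerivAt_id v).const_mul a)).const_mul a).sub (hasDerivAt_expDivExpSubOne hv)
  rw [← mul_div_assoc]
  exact h.congr_deriv (by ring)

theorem continuousOn_saddlePointFun (ha : a ≠ 0) : ContinuousOn (saddlePointFun a) (Ioi 0) :=
  fun _ hv => (hasDerivAt_saddlePointFun ha (ne_of_gt hv)).continuousAt.continuousWithinAt

theorem strictMonoOn_saddlePointFun (ha : 1 < a) : StrictMonoOn (saddlePointFun a) (Ioi 0) := by
  have ha0 : a ≠ 0 := by positivity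
  refine strictMonoOn_of_hasDerivWithinAt_pos (convex_Ioi 0) (continuousOn_saddlePointFun ha0)
    (fun _ hv => (hasDerivAt_saddlePointFun ha0 (ne_of_gt (interior_subset hv))).hasDerivWithinAt)
    fun v hv => ?_
  rw [interior_Ioi, mem_Ioi] at hv
  have hsq : (a * sinh (v / 2)) ^ 2 < sinh (a * (v / 2)) ^ 2 :=
    pow_lt_pow_left₀ (mul_sinh_lt_sinh_mul ha (half_pos hv)) (by positivity) two_ne_zero
  rw [sub_pos, ← div_eq_mul_inv, div_lt_iff₀ (by positivity), inv_mul_eq_div,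
    lt_div_iff₀ (by positivity)]
  nlinarith

theorem tendsto_saddlePointFun_nhdsNE_zero (ha : a ≠ 0) :
    Tendsto (saddlePointFun a) (𝓝[≠] 0) (𝓝 ((a - 1) / 2)) := by
  have hmul : Tendsto (a * ·) (𝓝[≠] 0) (𝓝[≠] 0) :=
    tendsto_nhdsWithin_of_tendsto_nhds_of_eventually_within _
      (by simpa using ((continuous_const_mul a).tendsto 0).mono_left nhdsWithin_le_nhds)
      (eventually_nhdsWithin_of_forall fun v hv => mul_ne_zero ha hv)
  have h := ((tendsto_expDivExpSubOne_sub_inv.comp hmul).const_mul a).sub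
    tendsto_expDivExpSubOne_sub_inv
  convert h using 2 with v
  · simp only [saddlePointFun, Function.comp_apply, mul_sub, mul_inv, mul_inv_cancel_left₀ ha]
    ring
  · ring

theorem tendsto_saddlePointFun_atTop (ha : 0 < a) :
    Tendsto (saddlePointFun a) atTop (𝓝 (a - 1)) := by
  have h := ((tendsto_expDivExpSubOne_atTop.comp (tendsto_id.const_mul_atTop ha)).const_mul
    a).sub tendsto_expDivExpSubOne_atTop
  rwa [mul_one] at h

end

theorem StrictMonoOn.existsUnique_eq_of_tendsto {f : ℝ → ℝ} {c l u y : ℝ}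
    (hmono : StrictMonoOn f (Ioi c)) (hcont : ContinuousOn f (Ioi c))
    (hl : Tendsto f (𝓝[>] c) (𝓝 l)) (hu : Tendsto f atTop (𝓝 u))
    (hly : l < y) (hyu : y < u) :
    ∃! x, c < x ∧ f x = y := by
  obtain ⟨x₁, hx₁y, hcx₁⟩ :=
    ((hl.eventually_lt_const hly).and self_mem_nhdsWithin).exists
  obtain ⟨x₂, hyx₂, hx₁x₂⟩ :=
    ((hu.eventually_const_lt hyu).and (eventually_gt_atTop x₁)).exists
  obtain ⟨x, hx, rfl⟩ := intermediate_value_Icc hx₁x₂.le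
    (hcont.mono fun z hz => lt_of_lt_of_le hcx₁ hz.1) ⟨hx₁y.le, hyx₂.le⟩
  have hcx : c < x := lt_of_lt_of_le hcx₁ hx.1
  exact ⟨x, ⟨hcx, rfl⟩, fun z ⟨hcz, hz⟩ => hmono.injOn hcz hcx hz⟩

/-- properties of `f(v) = a e^{av}/(e^{av}-1) - e^v/(e^v-1)` on `(0,∞)`:
strictly increasing, limit `(a-1)/2` at `0⁺`, limit `a-1` at `∞`, and for each
`1 < λ < 2` a unique `v > 0` with `f(v) = λ(a-1)/2`. -/
theorem saddle_point_function_increasing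
    (a : ℕ) (ha : 2 ≤ a) (f : ℝ → ℝ)
    (hf : ∀ v : ℝ, f v =
      (a : ℝ) * Real.exp ((a : ℝ) * v) / (Real.exp ((a : ℝ) * v) - 1)
        - Real.exp v / (Real.exp v - 1)) :
    StrictMonoOn f (Set.Ioi 0) ∧
      Filter.Tendsto f (nhdsWithin 0 (Set.Ioi 0)) (nhds (((a : ℝ) - 1) / 2)) ∧
      Filter.Tendsto f Filter.atTop (nhds ((a : ℝ) - 1)) ∧
      ∀ lam : ℝ, 1 < lam → lam < 2 →
        ∃! v : ℝ, 0 < v ∧ f v = lam * ((a : ℝ) - 1) / 2 := by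
  obtain rfl : f = saddlePointFun a :=
    funext fun v => by rw [hf, saddlePointFun, expDivExpSubOne, expDivExpSubOne, mul_div_assoc]
  have ha1 : (1 : ℝ) < a := by exact_mod_cast ha
  have hmono := strictMonoOn_saddlePointFun ha1
  have hzero := (tendsto_saddlePointFun_nhdsNE_zero (a := a) (by positivity)).mono_left
    (nhdsGT_le_nhdsNE 0)
  have htop := tendsto_saddlePointFun_atTop (a := a) (by positivity)
  refine ⟨hmono, hzero, htop, fun lam hlam1 hlam2 => ?_⟩
  exact hmono.existsUnique_eq_of_tendsto (continuousOn_saddlePointFun (by positivity)) hzero htop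
    (by nlinarith) (by nlinarith)
end
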